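/- arXiv:1102.4001 — 7 statements merged into one kernel-verified Lean document; each statement's English description precedes it below -/
import Mathlib

section
/- Let T > 0 and μ ∈ ℝ. For λ ∈ ℂ \ [0,∞) let √λ denote the square root with positive imaginary part, and set κ_c = Im √(μ + iπT) > 0. Then there exists a finite constant C (depending only on μ and T) such that for every x ∈ ℝ³ with x ≠ 0, the series K(x) := (2/π) · Σ_{n=1}^{∞} (n - 1/2)^{-1} · Im( e^{ i √(μ + i(n-1/2)·2πT) · |x| } ) / (4π|x|) converges absolutely, and |K(x)| ≤ C · e^{-κ_c |x|} / (4π|x|). -/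
open Complex Real

lemma sqrtProps (μ s : ℝ) (hs : 0 < s) :
    0 < (((μ : ℂ) + s * Complex.I) ^ ((1:ℂ)/2)).im ∧
    0 ≤ (((μ : ℂ) + s * Complex.I) ^ ((1:ℂ)/2)).re ∧
    (((μ : ℂ) + s * Complex.I) ^ ((1:ℂ)/2)).re ^ 2
      - (((μ : ℂ) + s * Complex.I) ^ ((1:ℂ)/2)).im ^ 2 = μ ∧
    (((μ : ℂ) + s * Complex.I) ^ ((1:ℂ)/2)).re ^ 2
      + (((μ : ℂ) + s * Complex.I) ^ ((1:ℂ)/2)).im ^ 2 = Real.sqrt (μ^2 + s^2) := by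
  set z : ℂ := (μ : ℂ) + s * Complex.I with hz
  have hzim : z.im = s := by simp [hz]
  have hzre : z.re = μ := by simp [hz]
  have hzne : z ≠ 0 := by
    intro h; rw [h] at hzim; simp at hzim; exact hs.ne' hzim.symm
  set w : ℂ := z ^ ((1:ℂ)/2) with hw
  -- w * w = z
  have hsq : w * w = z := by
    rw [hw, ← Complex.cpow_add _ _ hzne]
    norm_num
  -- arg facts
  have harg1 : 0 < Complex.arg z := by
    rcases lt_or_eq_of_le (Complex.arg_nonneg_iff.mpr (by rw [hzim]; exact hs.le)) with h | h
    · exact h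
    · exfalso
      have := Complex.sin_arg z
      rw [← h, Real.sin_zero] at this
      have habs : (0:ℝ) < ‖z‖ := norm_pos_iff.mpr hzne
      rw [hzim] at this
      have : s = 0 := by field_simp at this; linarith [this]
      exact hs.ne' this
  have harg2 : Complex.arg z < Real.pi := Complex.arg_lt_pi_iff.mpr (Or.inr (by rw [hzim]; exact hs.ne'))
  have hwdef : w = Complex.exp (Complex.log z * ((1:ℂ)/2)) := Complex.cpow_def_of_ne_zero hzne _
  have hre' : (Complex.log z * ((1:ℂ)/2)).re = Real.log ‖z‖ / 2 := by
    simp [Complex.log_re]; ring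
  have him' : (Complex.log z * ((1:ℂ)/2)).im = Complex.arg z / 2 := by
    simp [Complex.log_im]; ring
  have hwim : w.im = Real.exp (Real.log ‖z‖ / 2) * Real.sin (Complex.arg z / 2) := by
    rw [hwdef, Complex.exp_im, hre', him']
  have hwre : w.re = Real.exp (Real.log ‖z‖ / 2) * Real.cos (Complex.arg z / 2) := by
    rw [hwdef, Complex.exp_re, hre', him']
  have him_pos : 0 < w.im := by
    rw [hwim]
    exact mul_pos (Real.exp_pos _)
      (Real.sin_pos_of_pos_of_lt_pi (by linarith) (by linarith [Real.pi_pos]))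
  have hre_pos : 0 ≤ w.re := by
    rw [hwre]
    refine le_of_lt (mul_pos (Real.exp_pos _) (Real.cos_pos_of_mem_Ioo ⟨?_, ?_⟩))
    · linarith [Real.pi_pos]
    · linarith
  refine ⟨him_pos, hre_pos, ?_, ?_⟩
  · have := congrArg Complex.re hsq
    simp [Complex.mul_re] at this
    rw [hzre] at this; nlinarith [this]
  · have h1 := congrArg Complex.re hsq
    have h2 := congrArg Complex.im hsq
    simp [Complex.mul_re, Complex.mul_im] at h1 h2
    rw [hzre] at h1; rw [hzim] at h2
    have hkey : (w.re^2 + w.im^2)^2 = μ^2 + s^2 := by nlinarith [h1, h2]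
    have hnn : 0 ≤ w.re^2 + w.im^2 := by positivity
    rw [← hkey, Real.sqrt_sq hnn]

lemma expIm (z : ℂ) (r : ℝ) :
    (Complex.exp (Complex.I * z * r)).im = Real.exp (-(z.im) * r) * Real.sin (z.re * r) := by
  have h1 : (Complex.I * z * (r:ℂ)).re = -(z.im) * r := by
    simp [Complex.mul_re, Complex.mul_im]
  have h2 : (Complex.I * z * (r:ℂ)).im = z.re * r := by
    simp [Complex.mul_re, Complex.mul_im]
  rw [Complex.exp_im, h1, h2]

lemma sum_inv_sqrt (K : ℕ) :
    ∑ i ∈ Finset.range K, (Real.sqrt (i+1))⁻¹ ≤ 2 * Real.sqrt K := by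
  induction K with
  | zero => simp
  | succ n ih =>
    rw [Finset.sum_range_succ]
    have h1 : Real.sqrt n ≤ Real.sqrt (n+1) := Real.sqrt_le_sqrt (by push_cast; linarith)
    have h2 : 0 < Real.sqrt ((n:ℝ)+1) := Real.sqrt_pos.mpr (by positivity)
    have hsq : Real.sqrt ((n:ℝ)+1) * Real.sqrt ((n:ℝ)+1) = (n:ℝ)+1 :=
      Real.mul_self_sqrt (by positivity)
    have hsqn : Real.sqrt (n:ℝ) * Real.sqrt (n:ℝ) = (n:ℝ) :=
      Real.mul_self_sqrt (by positivity)
    have key : (Real.sqrt ((n:ℝ)+1))⁻¹ ≤ 2 * Real.sqrt ((n:ℝ)+1) - 2 * Real.sqrt n := by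
      rw [inv_le_iff_one_le_mul₀ h2]
      nlinarith [h1, h2, hsq, hsqn]
    push_cast
    linarith

lemma exp_neg_le (y : ℝ) (hy : 0 < y) : Real.exp (-y) ≤ 256 / y^4 := by
  have h : y/4 ≤ Real.exp (y/4) := by linarith [Real.add_one_le_exp (y/4)]
  have h4 : (y/4)^4 ≤ (Real.exp (y/4))^4 := pow_le_pow_left₀ (by positivity) h 4
  have hh : Real.exp (y/4) ^ 4 = Real.exp y := by
    rw [← Real.exp_nat_mul]; congr 1; push_cast; ring
  rw [hh] at h4
  have hy4 : 0 < y^4 := by positivity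
  have h5 : y^4 ≤ 256 * Real.exp y := by nlinarith
  rw [Real.exp_neg, inv_le_iff_one_le_mul₀ (Real.exp_pos y),
    show (256:ℝ)/y^4*Real.exp y = 256*Real.exp y/y^4 by ring, le_div_iff₀ hy4]
  linarith

lemma lemA (ρ M : ℝ) (hρ : 0 < ρ) (hM : 1 ≤ M) (u : ℕ → ℝ)
    (hnn : ∀ n, 0 ≤ u n) (h0 : u 0 ≤ 2)
    (h : ∀ n : ℕ, 1 ≤ n → u n ≤
      M * ((n:ℝ)⁻¹ * Real.exp (-(Real.sqrt n * ρ)) * min 1 (Real.sqrt n * ρ))) :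
    Summable u ∧ ∑' n, u n ≤ 2 + 260 * M := by
  set g : ℕ → ℝ := fun n => (n:ℝ)⁻¹ * Real.exp (-(Real.sqrt n * ρ)) * min 1 (Real.sqrt n * ρ)
    with hg
  have hgnn : ∀ n, 0 ≤ g n := by
    intro n
    have : (0:ℝ) ≤ min 1 (Real.sqrt n * ρ) := le_min zero_le_one (by positivity)
    positivity
  set N : ℕ := ⌈ρ⁻¹ ^ 2⌉₊ with hN
  have hNpos : 0 < N := Nat.ceil_pos.mpr (by positivity)
  have hNR : (0:ℝ) < (N:ℝ) := by exact_mod_cast hNpos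
  have hN1 : ρ⁻¹^2 ≤ (N:ℝ) := Nat.le_ceil _
  have hN2 : (N:ℝ) ≤ ρ⁻¹^2 + 1 := le_of_lt (Nat.ceil_lt_add_one (by positivity))
  have hρinv : (0:ℝ) < ρ⁻¹ := by positivity
  -- head bound
  have head : ∑ i ∈ Finset.Ico 1 (N+1), g i ≤ 4 := by
    have hterm : ∀ i ∈ Finset.Ico 1 (N+1), g i ≤ ρ * Real.exp (-ρ) * (Real.sqrt i)⁻¹ := by
      intro i hi
      simp only [Finset.mem_Ico] at hi
      have hi1 : (1:ℝ) ≤ (i:ℝ) := by exact_mod_cast hi.1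
      have hsi : 1 ≤ Real.sqrt i := by
        rw [show (1:ℝ) = Real.sqrt 1 by simp]; exact Real.sqrt_le_sqrt hi1
      have hsipos : 0 < Real.sqrt i := lt_of_lt_of_le one_pos hsi
      have hmss : Real.sqrt i * Real.sqrt i = (i:ℝ) := Real.mul_self_sqrt (by positivity)
      have hexp : Real.exp (-(Real.sqrt i * ρ)) ≤ Real.exp (-ρ) := by
        apply Real.exp_le_exp.mpr; nlinarith
      have hmin : min 1 (Real.sqrt i * ρ) ≤ Real.sqrt i * ρ := min_le_right _ _
      calc g i ≤ (i:ℝ)⁻¹ * Real.exp (-ρ) * (Real.sqrt i * ρ) := by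
            apply mul_le_mul ?_ hmin (by positivity) (by positivity)
            exact mul_le_mul_of_nonneg_left hexp (by positivity)
        _ = ρ * Real.exp (-ρ) * (Real.sqrt i)⁻¹ := by
            field_simp
            linear_combination hmss
    calc ∑ i ∈ Finset.Ico 1 (N+1), g i
        ≤ ∑ i ∈ Finset.Ico 1 (N+1), ρ * Real.exp (-ρ) * (Real.sqrt i)⁻¹ :=
          Finset.sum_le_sum hterm
      _ = ρ * Real.exp (-ρ) * ∑ i ∈ Finset.Ico 1 (N+1), (Real.sqrt i)⁻¹ := by
          rw [Finset.mul_sum]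
      _ ≤ ρ * Real.exp (-ρ) * (2 * Real.sqrt N) := by
          apply mul_le_mul_of_nonneg_left ?_ (by positivity)
          rw [Finset.sum_Ico_eq_sum_range]
          simp only [Nat.add_sub_cancel]
          refine le_trans (le_of_eq ?_) (sum_inv_sqrt N)
          apply Finset.sum_congr rfl
          intro i _
          congr 2
          push_cast; ring
      _ ≤ 4 := by
          have hsN : Real.sqrt N ≤ ρ⁻¹ + 1 := by
            rw [show ρ⁻¹ + 1 = Real.sqrt ((ρ⁻¹+1)^2) from (Real.sqrt_sq (by positivity)).symm]
            apply Real.sqrt_le_sqrt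
            nlinarith [hN2, hρinv]
          have he1 : Real.exp (-ρ) ≤ 1 := Real.exp_le_one_iff.mpr (by linarith)
          have he2 : ρ * Real.exp (-ρ) ≤ 1 := by
            rw [Real.exp_neg]
            calc ρ * (Real.exp ρ)⁻¹ ≤ Real.exp ρ * (Real.exp ρ)⁻¹ := by
                  gcongr; linarith [Real.add_one_le_exp ρ]
              _ = 1 := mul_inv_cancel₀ (ne_of_gt (Real.exp_pos _))
          have hρe : 0 ≤ ρ * Real.exp (-ρ) := by positivity
          calc ρ * Real.exp (-ρ) * (2 * Real.sqrt N)
              ≤ ρ * Real.exp (-ρ) * (2 * (ρ⁻¹ + 1)) := by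
                apply mul_le_mul_of_nonneg_left ?_ hρe
                have : (0:ℝ) ≤ Real.sqrt N := Real.sqrt_nonneg _
                linarith [hsN]
            _ = 2 * Real.exp (-ρ) + 2 * (ρ * Real.exp (-ρ)) := by field_simp
            _ ≤ 4 := by linarith
  -- tail bound (finite sums)
  have tail : ∀ K : ℕ, ∑ i ∈ Finset.Ico (N+1) K, g i ≤ 256 := by
    intro K
    have hterm : ∀ k ∈ Finset.range (K - (N+1)), g (N+1+k) ≤
        256 * (ρ⁻¹)^4 * (N:ℝ)⁻¹ *
          (((N+k:ℕ):ℝ)⁻¹ - ((N+(k+1):ℕ):ℝ)⁻¹) := by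
      intro k _
      have hi : (1:ℝ) ≤ ((N+1+k:ℕ):ℝ) := by push_cast; linarith
      have hipos : (0:ℝ) < ((N+1+k:ℕ):ℝ) := by linarith
      have hspos : 0 < Real.sqrt ((N+1+k:ℕ):ℝ) := Real.sqrt_pos.mpr hipos
      have hexp : Real.exp (-(Real.sqrt ((N+1+k:ℕ):ℝ) * ρ)) ≤
          256 / (Real.sqrt ((N+1+k:ℕ):ℝ) * ρ)^4 :=
        exp_neg_le _ (by positivity)
      have hmin : min 1 (Real.sqrt ((N+1+k:ℕ):ℝ) * ρ) ≤ 1 := min_le_left _ _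
      have hminnn : 0 ≤ min 1 (Real.sqrt ((N+1+k:ℕ):ℝ) * ρ) :=
        le_min zero_le_one (by positivity)
      have hpow : (Real.sqrt ((N+1+k:ℕ):ℝ) * ρ)^4 = ((N+1+k:ℕ):ℝ)^2 * ρ^4 := by
        have h4 : (Real.sqrt ((N+1+k:ℕ):ℝ))^4 = ((N+1+k:ℕ):ℝ)^2 := by
          rw [show 4 = 2*2 by rfl, pow_mul, Real.sq_sqrt (le_of_lt hipos)]
        rw [mul_pow, h4]
      have step1 : g (N+1+k) ≤ 256 * (ρ⁻¹)^4 / ((N+1+k:ℕ):ℝ)^3 := by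
        calc g (N+1+k)
            ≤ ((N+1+k:ℕ):ℝ)⁻¹ * (256 / (((N+1+k:ℕ):ℝ)^2 * ρ^4)) * 1 := by
              rw [← hpow]
              apply mul_le_mul ?_ hmin hminnn (by positivity)
              exact mul_le_mul_of_nonneg_left hexp (by positivity)
          _ = 256 * (ρ⁻¹)^4 / ((N+1+k:ℕ):ℝ)^3 := by
              field_simp
      refine le_trans step1 ?_
      have heq : ((N+k:ℕ):ℝ)⁻¹ - ((N+(k+1):ℕ):ℝ)⁻¹ =
          (((N+k:ℕ):ℝ) * ((N+(k+1):ℕ):ℝ))⁻¹ := by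
        have h1 : (0:ℝ) < ((N+k:ℕ):ℝ) := by
          have : 1 ≤ N + k := le_add_right (Nat.one_le_iff_ne_zero.mpr hNpos.ne')
          exact_mod_cast Nat.lt_of_lt_of_le Nat.zero_lt_one this
        have h2 : (0:ℝ) < ((N+(k+1):ℕ):ℝ) := by push_cast; positivity
        field_simp
        push_cast; ring
      rw [heq]
      have hkey : (((N+1+k:ℕ):ℝ)^3)⁻¹ ≤ ((N:ℝ) * (((N+k:ℕ):ℝ) * ((N+(k+1):ℕ):ℝ)))⁻¹ := by
        apply inv_anti₀
        · have hh1 : (0:ℝ) < ((N+k:ℕ):ℝ) := by push_cast; linarith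
          have hh2 : (0:ℝ) < ((N+(k+1):ℕ):ℝ) := by push_cast; positivity
          positivity
        · push_cast
          have e1 : (N:ℝ)*((N:ℝ)+(k:ℝ)) ≤ ((N:ℝ)+(k:ℝ)+1)^2 := by
            nlinarith [hNR, (Nat.cast_nonneg k : (0:ℝ) ≤ (k:ℝ))]
          have e2 : (0:ℝ) < (N:ℝ)+(k:ℝ)+1 := by
            have := (Nat.cast_nonneg k : (0:ℝ) ≤ (k:ℝ)); linarith
          nlinarith [e1, e2]
      calc 256 * (ρ⁻¹)^4 / ((N+1+k:ℕ):ℝ)^3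
          = 256 * (ρ⁻¹)^4 * (((N+1+k:ℕ):ℝ)^3)⁻¹ := by rw [div_eq_mul_inv]
        _ ≤ 256 * (ρ⁻¹)^4 * ((N:ℝ) * (((N+k:ℕ):ℝ) * ((N+(k+1):ℕ):ℝ)))⁻¹ :=
            mul_le_mul_of_nonneg_left hkey (by positivity)
        _ = 256 * (ρ⁻¹)^4 * ((N:ℝ)⁻¹ * (((N+k:ℕ):ℝ) * ((N+(k+1):ℕ):ℝ))⁻¹) := by
            rw [mul_inv]
        _ = 256 * (ρ⁻¹)^4 * (N:ℝ)⁻¹ * (((N+k:ℕ):ℝ) * ((N+(k+1):ℕ):ℝ))⁻¹ := by ring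
    calc ∑ i ∈ Finset.Ico (N+1) K, g i
        = ∑ k ∈ Finset.range (K - (N+1)), g (N+1+k) := by rw [Finset.sum_Ico_eq_sum_range]
      _ ≤ ∑ k ∈ Finset.range (K - (N+1)),
            256 * (ρ⁻¹)^4 * (N:ℝ)⁻¹ * (((N+k:ℕ):ℝ)⁻¹ - ((N+(k+1):ℕ):ℝ)⁻¹) :=
          Finset.sum_le_sum hterm
      _ = 256 * (ρ⁻¹)^4 * (N:ℝ)⁻¹ *
            ∑ k ∈ Finset.range (K - (N+1)), ((fun j => ((N+j:ℕ):ℝ)⁻¹) k - (fun j => ((N+j:ℕ):ℝ)⁻¹) (k+1)) := by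
          rw [Finset.mul_sum]
      _ ≤ 256 := by
          rw [Finset.sum_range_sub']
          simp only [Nat.add_zero]
          have htel : ((N:ℝ))⁻¹ - ((N+(K-(N+1)):ℕ):ℝ)⁻¹ ≤ (N:ℝ)⁻¹ := by
            have : (0:ℝ) ≤ ((N+(K-(N+1)):ℕ):ℝ)⁻¹ := by positivity
            linarith
          have hNinv : (N:ℝ)⁻¹ ≤ ρ^2 := by
            rw [inv_le_comm₀ hNR (by positivity)]
            calc (ρ^2)⁻¹ = ρ⁻¹^2 := by rw [← inv_pow]
              _ ≤ (N:ℝ) := hN1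
          calc 256 * (ρ⁻¹)^4 * (N:ℝ)⁻¹ * (((N:ℝ))⁻¹ - ((N+(K-(N+1)):ℕ):ℝ)⁻¹)
              ≤ 256 * (ρ⁻¹)^4 * (N:ℝ)⁻¹ * (N:ℝ)⁻¹ := by
                apply mul_le_mul_of_nonneg_left htel (by positivity)
            _ ≤ 256 * (ρ⁻¹)^4 * (ρ^2 * ρ^2) := by
                rw [mul_assoc]
                apply mul_le_mul_of_nonneg_left ?_ (by positivity)
                apply mul_le_mul hNinv hNinv (by positivity) (by positivity)
            _ = 256 := by
                rw [show ρ^2*ρ^2 = ρ^4 by ring]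
                field_simp
  -- assemble
  have partial_bound : ∀ K : ℕ, ∑ i ∈ Finset.range K, u i ≤ 2 + 260 * M := by
    intro K
    rcases Nat.eq_zero_or_pos K with rfl | hK
    · simp; nlinarith
    have hsplit : ∑ i ∈ Finset.range K, u i = u 0 + ∑ i ∈ Finset.Ico 1 K, u i := by
      rw [Finset.range_eq_Ico, Finset.sum_eq_sum_Ico_succ_bot hK]
    have hIco : ∑ i ∈ Finset.Ico 1 K, u i ≤ M * ∑ i ∈ Finset.Ico 1 K, g i := by
      rw [Finset.mul_sum]
      apply Finset.sum_le_sum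
      intro i hi
      simp only [Finset.mem_Ico] at hi
      exact h i hi.1
    have hgsum : ∑ i ∈ Finset.Ico 1 K, g i ≤ 260 := by
      have hsub : Finset.Ico 1 K ⊆ Finset.Ico 1 (max K (N+1)) := by
        apply Finset.Ico_subset_Ico le_rfl (le_max_left _ _)
      have hmono : ∑ i ∈ Finset.Ico 1 K, g i ≤ ∑ i ∈ Finset.Ico 1 (max K (N+1)), g i :=
        Finset.sum_le_sum_of_subset_of_nonneg hsub (fun i _ _ => hgnn i)
      have hsplit2 : ∑ i ∈ Finset.Ico 1 (N+1), g i + ∑ i ∈ Finset.Ico (N+1) (max K (N+1)), g i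
          = ∑ i ∈ Finset.Ico 1 (max K (N+1)), g i :=
        Finset.sum_Ico_consecutive _ (by omega) (le_max_right _ _)
      have := tail (max K (N+1))
      linarith
    have hM0 : 0 ≤ M := by linarith
    calc ∑ i ∈ Finset.range K, u i = u 0 + ∑ i ∈ Finset.Ico 1 K, u i := hsplit
      _ ≤ 2 + M * 260 := by
          have : M * ∑ i ∈ Finset.Ico 1 K, g i ≤ M * 260 := by
            apply mul_le_mul_of_nonneg_left hgsum hM0
          linarith
      _ = 2 + 260 * M := by ring
  exact ⟨summable_of_sum_range_le hnn partial_bound,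
    Real.tsum_le_of_sum_range_le hnn partial_bound⟩

noncomputable def sqz (μ T : ℝ) (n : ℕ) : ℂ :=
  ((μ : ℂ) + (((2*(n:ℝ)+1) * Real.pi * T : ℝ) : ℂ) * Complex.I) ^ ((1:ℂ)/2)

set_option maxHeartbeats 2000000 in
lemma kappaBounds (T μ : ℝ) (hT : 0 < T) :
    ∃ c A : ℝ, 0 < c ∧ 0 < A ∧ ∀ n : ℕ,
      0 < (sqz μ T n).im ∧ 0 ≤ (sqz μ T n).re ∧ (sqz μ T 0).im ≤ (sqz μ T n).im ∧
      (1 ≤ n → (sqz μ T n).re ≤ A * Real.sqrt n ∧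
        c * Real.sqrt n ≤ (sqz μ T n).im - (sqz μ T 0).im) := by
  have hπ : 0 < Real.pi := Real.pi_pos
  set L : ℝ := |μ| + 3 * Real.pi * T with hL
  have hLpos : 0 < L := by positivity
  set A : ℝ := Real.sqrt L with hA
  have hApos : 0 < A := Real.sqrt_pos.mpr hLpos
  set c₁ : ℝ := Real.pi^2 * T^2 / L with hc₁
  have hc₁pos : 0 < c₁ := by positivity
  refine ⟨c₁ / (2*A), A, div_pos hc₁pos (by positivity), hApos, ?_⟩
  have hc2A : 2 * A * (c₁ / (2*A)) = c₁ := by field_simp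
  -- abbreviations
  set s : ℕ → ℝ := fun n => (2*(n:ℝ)+1) * Real.pi * T with hs
  have hspos : ∀ n : ℕ, 0 < s n := by
    intro n; simp only [hs]; positivity
  have hP : ∀ n : ℕ, 0 < (sqz μ T n).im ∧ 0 ≤ (sqz μ T n).re ∧
      (sqz μ T n).re^2 - (sqz μ T n).im^2 = μ ∧
      (sqz μ T n).re^2 + (sqz μ T n).im^2 = Real.sqrt (μ^2 + (s n)^2) := by
    intro n; exact sqrtProps μ (s n) (hspos n)
  -- m n facts
  set m : ℕ → ℝ := fun n => Real.sqrt (μ^2 + (s n)^2) with hm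
  have hmsq : ∀ n, (m n)^2 = μ^2 + (s n)^2 := by
    intro n; exact Real.sq_sqrt (by positivity)
  have hmpos : ∀ n, 0 < m n := by
    intro n; apply Real.sqrt_pos.mpr; positivity
  have hmle : ∀ n, m n ≤ |μ| + s n := by
    intro n
    have : Real.sqrt (μ^2 + (s n)^2) ≤ Real.sqrt ((|μ| + s n)^2) := by
      apply Real.sqrt_le_sqrt
      have : μ^2 = |μ|^2 := (_root_.sq_abs μ).symm
      nlinarith [abs_nonneg μ, (hspos n).le]
    simpa [Real.sqrt_sq (by positivity : (0:ℝ) ≤ |μ| + s n)] using this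
  have hkapsq : ∀ n, (sqz μ T n).im^2 = (m n - μ)/2 := by
    intro n
    obtain ⟨_, _, h3, h4⟩ := hP n
    simp only [hm]
    linarith [h3, h4]
  have hmmono : ∀ n, m 0 ≤ m n := by
    intro n
    apply Real.sqrt_le_sqrt
    have h0n : s 0 ≤ s n := by
      simp only [hs]; push_cast
      nlinarith [mul_nonneg (Nat.cast_nonneg n : (0:ℝ) ≤ n) (mul_pos hπ hT).le]
    nlinarith [hspos 0, hspos n]
  have hk0n : ∀ n, (sqz μ T 0).im ≤ (sqz μ T n).im := by
    intro n
    have h1 := hkapsq 0; have h2 := hkapsq n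
    have := hmmono n
    nlinarith [(hP 0).1, (hP n).1]
  -- bound: for n ≥ 1, |μ| + s n ≤ n * L
  have hnL : ∀ n : ℕ, 1 ≤ n → |μ| + s n ≤ (n:ℝ) * L := by
    intro n hn
    have hn1 : (1:ℝ) ≤ (n:ℝ) := by exact_mod_cast hn
    simp only [hs, hL]
    nlinarith [abs_nonneg μ, hπ, hT, mul_pos hπ hT]
  intro n
  refine ⟨(hP n).1, (hP n).2.1, hk0n n, fun hn => ?_⟩
  have hn1 : (1:ℝ) ≤ (n:ℝ) := by exact_mod_cast hn
  have hsn1 : 1 ≤ Real.sqrt n := by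
    rw [show (1:ℝ) = Real.sqrt 1 by simp]; exact Real.sqrt_le_sqrt hn1
  have hAsq : A * Real.sqrt n = Real.sqrt ((n:ℝ) * L) := by
    rw [Real.sqrt_mul (by positivity) L, mul_comm]
  -- a n ≤ A √n and κ n ≤ A √n
  have hbound : ∀ x : ℝ, 0 ≤ x → x^2 ≤ μ^2 + (s n)^2 → False ∨ True := fun _ _ _ => Or.inr trivial
  have hmnL : m n ≤ (n:ℝ) * L := le_trans (hmle n) (hnL n hn)
  obtain ⟨hκpos, hapos, h3, h4⟩ := hP n
  have hasq : (sqz μ T n).re ^2 ≤ (n:ℝ) * L := by nlinarith [hκpos]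
  have hksq : (sqz μ T n).im ^2 ≤ (n:ℝ) * L := by nlinarith [hapos, sq_nonneg (sqz μ T n).re]
  have haA : (sqz μ T n).re ≤ A * Real.sqrt n := by
    rw [hAsq]
    exact (Real.le_sqrt hapos (by positivity)).mpr hasq
  have hkA : (sqz μ T n).im ≤ A * Real.sqrt n := by
    rw [hAsq]
    exact (Real.le_sqrt hκpos.le (by positivity)).mpr hksq
  refine ⟨haA, ?_⟩
  -- m n - m 0 ≥ 2 c₁ n
  have hsq_diff : (m n - m 0) * (m n + m 0) = (s n)^2 - (s 0)^2 := by
    linear_combination (hmsq n) - (hmsq 0)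
  have hs_diff : (s n)^2 - (s 0)^2 ≥ 4 * (n:ℝ)^2 * Real.pi^2 * T^2 := by
    have e : (s n)^2 - (s 0)^2 = (4*(n:ℝ)^2 + 4*(n:ℝ)) * (Real.pi*T)^2 := by
      simp only [hs]; push_cast; ring
    rw [e]
    have h1 : (0:ℝ) ≤ (n:ℝ) * (Real.pi*T)^2 :=
      mul_nonneg (Nat.cast_nonneg n) (sq_nonneg _)
    nlinarith [h1]
  have hsum_le : m n + m 0 ≤ 2 * (n:ℝ) * L := by
    have h1 := le_trans (hmle n) (hnL n hn)
    have h2 : m 0 ≤ m n := hmmono n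
    linarith
  have hdiff_nonneg : 0 ≤ m n - m 0 := by linarith [hmmono n]
  have hc₁L : c₁ * L = Real.pi^2 * T^2 := by
    rw [hc₁]; field_simp
  have hnLpos : (0:ℝ) < 2 * (n:ℝ) * L := by positivity
  have hmdiff : 2 * c₁ * (n:ℝ) ≤ m n - m 0 := by
    have key : (2*c₁*(n:ℝ))*(2*(n:ℝ)*L) ≤ (m n - m 0)*(2*(n:ℝ)*L) := by
      have e : (2*c₁*(n:ℝ))*(2*(n:ℝ)*L) = 4*(Real.pi^2*T^2)*(n:ℝ)^2 := by
        linear_combination (4*(n:ℝ)^2) * hc₁L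
      rw [e]
      nlinarith [hsq_diff, hs_diff, mul_nonneg hdiff_nonneg (sub_nonneg.mpr hsum_le)]
    exact le_of_mul_le_mul_right key hnLpos
  -- κ n ^2 - κ 0 ^2 ≥ c₁ n
  have hkdiffsq : c₁ * (n:ℝ) ≤ (sqz μ T n).im^2 - (sqz μ T 0).im^2 := by
    rw [hkapsq n, hkapsq 0]; linarith
  -- conclude
  have hκ0pos := (hP 0).1
  have hk0len := hk0n n
  have hsnn : Real.sqrt n * Real.sqrt n = (n:ℝ) := Real.mul_self_sqrt (by positivity)
  set D : ℝ := (sqz μ T n).im - (sqz μ T 0).im with hD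
  have hDnn : 0 ≤ D := by simp only [hD]; linarith
  have h1 : (sqz μ T n).im^2 - (sqz μ T 0).im^2 = D * ((sqz μ T n).im + (sqz μ T 0).im) := by
    simp only [hD]; ring
  have h2 : (sqz μ T n).im + (sqz μ T 0).im ≤ 2*A*Real.sqrt n := by
    have : (sqz μ T 0).im ≤ A * Real.sqrt n := le_trans hk0len hkA
    linarith
  have h3 : c₁*(n:ℝ) ≤ D * (2*A*Real.sqrt n) := by
    calc c₁*(n:ℝ) ≤ (sqz μ T n).im^2 - (sqz μ T 0).im^2 := hkdiffsq
      _ = D * ((sqz μ T n).im + (sqz μ T 0).im) := h1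
      _ ≤ D * (2*A*Real.sqrt n) := mul_le_mul_of_nonneg_left h2 hDnn
  have h2A : (0:ℝ) < 2*A := by positivity
  rw [div_mul_eq_mul_div, div_le_iff₀ h2A]
  have hsnpos : (0:ℝ) < Real.sqrt n := lt_of_lt_of_le one_pos hsn1
  have h4 : (c₁ * Real.sqrt n) * Real.sqrt n ≤ (D * (2*A)) * Real.sqrt n := by
    calc (c₁ * Real.sqrt n) * Real.sqrt n = c₁ * (n:ℝ) := by
          rw [mul_assoc, hsnn]
      _ ≤ D * (2*A*Real.sqrt n) := h3
      _ = (D * (2*A)) * Real.sqrt n := by ring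
  exact le_of_mul_le_mul_right h4 hsnpos

/-- Lemma 4.2 of Frank–Hainzl–Seiringer–Solovej in dimension 3: the integral kernel of
`K_T⁻¹`, given by the series
`K(x) = (2/π) Σ_{n≥1} (n-1/2)⁻¹ Im(e^{i√(μ+i(n-1/2)2πT)|x|})/(4π|x|)`,
converges absolutely and is bounded by `C e^{-κ_c|x|}/(4π|x|)` with
`κ_c = Im √(μ+iπT) > 0`.  Here `√` is the principal complex square root, which has
positive imaginary part on the upper half plane. -/
theorem kernel_of_KT_inverse_bound (T μ : ℝ) (hT : 0 < T) :
    0 < ((((μ : ℂ) + Real.pi * T * Complex.I) ^ ((1 : ℂ) / 2)).im) ∧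
    ∃ C : ℝ, ∀ x : EuclideanSpace ℝ (Fin 3), x ≠ 0 →
      Summable (fun n : ℕ =>
        |2 / Real.pi * (((n : ℝ) + 1) - 1 / 2)⁻¹ *
          (Complex.exp (Complex.I *
              (((μ : ℂ) + (((n : ℝ) + 1) - 1 / 2) * (2 * Real.pi * T) * Complex.I) ^
                ((1 : ℂ) / 2)) * (‖x‖ : ℂ))).im / (4 * Real.pi * ‖x‖)|) ∧
      |∑' n : ℕ,
          2 / Real.pi * (((n : ℝ) + 1) - 1 / 2)⁻¹ *
            (Complex.exp (Complex.I *
                (((μ : ℂ) + (((n : ℝ) + 1) - 1 / 2) * (2 * Real.pi * T) * Complex.I) ^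
                  ((1 : ℂ) / 2)) * (‖x‖ : ℂ))).im / (4 * Real.pi * ‖x‖)|
        ≤ C * Real.exp (-((((μ : ℂ) + Real.pi * T * Complex.I) ^ ((1 : ℂ) / 2)).im) * ‖x‖) /
            (4 * Real.pi * ‖x‖) := by
  have hπ : 0 < Real.pi := Real.pi_pos
  -- identify the κ_c expression with sqz μ T 0
  have hz0 : ((μ : ℂ) + Real.pi * T * Complex.I) ^ ((1:ℂ)/2) = sqz μ T 0 := by
    unfold sqz; congr 2; push_cast; ring
  -- identify the n-th square root with sqz μ T n
  have hZ : ∀ n : ℕ, (((μ : ℂ) + (((n : ℝ) + 1) - 1 / 2) * (2 * Real.pi * T) * Complex.I) ^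
      ((1:ℂ)/2)) = sqz μ T n := by
    intro n; unfold sqz; congr 2; push_cast; ring
  obtain ⟨c, A, hc, hA, hprop⟩ := kappaBounds T μ hT
  have hκ0pos : 0 < (sqz μ T 0).im := (hprop 0).1
  constructor
  · rw [hz0]; exact hκ0pos
  set M : ℝ := max 1 (A / c) with hM
  have hM1 : (1:ℝ) ≤ M := le_max_left _ _
  refine ⟨2 / Real.pi * (2 + 260 * M), ?_⟩
  intro x hx
  set r : ℝ := ‖x‖ with hr
  have hrpos : 0 < r := by
    simpa [hr] using norm_pos_iff.mpr hx
  -- the terms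
  set F : ℕ → ℝ := fun n =>
    2 / Real.pi * (((n : ℝ) + 1) - 1 / 2)⁻¹ *
      (Complex.exp (Complex.I * (((μ : ℂ) + (((n : ℝ) + 1) - 1 / 2) * (2 * Real.pi * T)
        * Complex.I) ^ ((1:ℂ)/2)) * (r : ℂ))).im / (4 * Real.pi * r) with hF
  set u : ℕ → ℝ := fun n =>
    ((n:ℝ) + 1/2)⁻¹ * Real.exp (-(((sqz μ T n).im - (sqz μ T 0).im) * r)) *
      min 1 ((sqz μ T n).re * r) with hu
  set D : ℝ := 2 / Real.pi * Real.exp (-((sqz μ T 0).im) * r) / (4 * Real.pi * r) with hD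
  have hDpos : 0 < D := by positivity
  -- pointwise bound |F n| ≤ D * u n
  have hFu : ∀ n : ℕ, |F n| ≤ D * u n := by
    intro n
    have hq : (0:ℝ) < (n:ℝ) + 1/2 := by positivity
    have hqe : (((n : ℝ) + 1) - 1 / 2) = (n:ℝ) + 1/2 := by ring
    obtain ⟨hκpos, hapos, hκ0le, _⟩ := hprop n
    have him : (Complex.exp (Complex.I * (((μ : ℂ) + (((n : ℝ) + 1) - 1 / 2) *
        (2 * Real.pi * T) * Complex.I) ^ ((1:ℂ)/2)) * (r : ℂ))).im
        = Real.exp (-((sqz μ T n).im) * r) * Real.sin ((sqz μ T n).re * r) := by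
      rw [hZ n, expIm]
    have habs : |F n| = 2 / Real.pi * ((n:ℝ) + 1/2)⁻¹ *
        (Real.exp (-((sqz μ T n).im) * r) * |Real.sin ((sqz μ T n).re * r)|)
          / (4 * Real.pi * r) := by
      rw [hF]
      simp only []
      rw [him, hqe, abs_div, abs_mul, abs_mul, abs_mul]
      rw [abs_of_pos (by positivity : (0:ℝ) < 2 / Real.pi),
        abs_of_pos (by positivity : (0:ℝ) < ((n:ℝ) + 1/2)⁻¹),
        abs_of_pos (Real.exp_pos _),
        abs_of_pos (by positivity : (0:ℝ) < 4 * Real.pi * r)]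
    rw [habs]
    have hsin : |Real.sin ((sqz μ T n).re * r)| ≤ min 1 ((sqz μ T n).re * r) := by
      apply le_min
      · exact abs_le.mpr ⟨Real.neg_one_le_sin _, Real.sin_le_one _⟩
      · calc |Real.sin ((sqz μ T n).re * r)| ≤ |(sqz μ T n).re * r| :=
              Real.abs_sin_le_abs
          _ = (sqz μ T n).re * r := abs_of_nonneg (by positivity)
    have hexpsplit : Real.exp (-((sqz μ T n).im) * r)
        = Real.exp (-((sqz μ T 0).im) * r) *
          Real.exp (-(((sqz μ T n).im - (sqz μ T 0).im) * r)) := by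
      rw [← Real.exp_add]; congr 1; ring
    rw [hexpsplit]
    have expand : D * u n = 2 / Real.pi * ((n:ℝ) + 1/2)⁻¹ *
        (Real.exp (-((sqz μ T 0).im) * r) *
          Real.exp (-(((sqz μ T n).im - (sqz μ T 0).im) * r)) *
            min 1 ((sqz μ T n).re * r)) / (4 * Real.pi * r) := by
      rw [hD, hu]; ring
    rw [expand]
    gcongr
  -- u satisfies the hypotheses of lemA
  have hunn : ∀ n, 0 ≤ u n := by
    intro n
    have h1 : (0:ℝ) ≤ min 1 ((sqz μ T n).re * r) :=
      le_min zero_le_one (mul_nonneg (hprop n).2.1 hrpos.le)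
    have h2 : (0:ℝ) ≤ ((n:ℝ) + 1/2)⁻¹ := by positivity
    exact mul_nonneg (mul_nonneg h2 (Real.exp_pos _).le) h1
  have hu0 : u 0 ≤ 2 := by
    have he : u 0 = 2 * 1 * min 1 ((sqz μ T 0).re * r) := by
      rw [hu]; norm_num
    rw [he]
    have : min 1 ((sqz μ T 0).re * r) ≤ 1 := min_le_left _ _
    linarith
  have hun : ∀ n : ℕ, 1 ≤ n → u n ≤
      M * ((n:ℝ)⁻¹ * Real.exp (-(Real.sqrt n * (c * r))) * min 1 (Real.sqrt n * (c * r))) := by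
    intro n hn
    obtain ⟨hκpos, hapos, hκ0le, hrest⟩ := hprop n
    obtain ⟨haA, hcκ⟩ := hrest hn
    have hnpos : (0:ℝ) < (n:ℝ) := by exact_mod_cast hn
    have hq : ((n:ℝ) + 1/2)⁻¹ ≤ (n:ℝ)⁻¹ := inv_anti₀ hnpos (by linarith)
    have hexp : Real.exp (-(((sqz μ T n).im - (sqz μ T 0).im) * r)) ≤
        Real.exp (-(Real.sqrt n * (c * r))) := by
      apply Real.exp_le_exp.mpr
      have : Real.sqrt n * (c * r) ≤ ((sqz μ T n).im - (sqz μ T 0).im) * r := by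
        have := mul_le_mul_of_nonneg_right hcκ hrpos.le
        calc Real.sqrt n * (c * r) = c * Real.sqrt n * r := by ring
          _ ≤ ((sqz μ T n).im - (sqz μ T 0).im) * r := this
      linarith
    have hy : (0:ℝ) ≤ Real.sqrt n * (c * r) := by positivity
    have hmin : min 1 ((sqz μ T n).re * r) ≤ M * min 1 (Real.sqrt n * (c * r)) := by
      rcases le_total 1 (Real.sqrt n * (c * r)) with hcase | hcase
      · rw [min_eq_left hcase]
        calc min 1 ((sqz μ T n).re * r) ≤ 1 := min_le_left _ _
          _ ≤ M := hM1
          _ = M * 1 := (mul_one M).symm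
      · rw [min_eq_right hcase]
        calc min 1 ((sqz μ T n).re * r) ≤ (sqz μ T n).re * r := min_le_right _ _
          _ ≤ A * Real.sqrt n * r := mul_le_mul_of_nonneg_right haA hrpos.le
          _ = (A / c) * (Real.sqrt n * (c * r)) := by field_simp
          _ ≤ M * (Real.sqrt n * (c * r)) :=
              mul_le_mul_of_nonneg_right (le_max_right 1 (A/c)) hy
    calc u n = ((n:ℝ) + 1/2)⁻¹ * Real.exp (-(((sqz μ T n).im - (sqz μ T 0).im) * r)) *
          min 1 ((sqz μ T n).re * r) := by rw [hu]
      _ ≤ (n:ℝ)⁻¹ * Real.exp (-(Real.sqrt n * (c * r))) *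
          (M * min 1 (Real.sqrt n * (c * r))) := by
          apply mul_le_mul ?_ hmin ?_ ?_
          · exact mul_le_mul hq hexp (Real.exp_pos _).le (by positivity)
          · exact le_min zero_le_one (mul_nonneg hapos hrpos.le)
          · positivity
      _ = M * ((n:ℝ)⁻¹ * Real.exp (-(Real.sqrt n * (c * r))) *
          min 1 (Real.sqrt n * (c * r))) := by ring
  obtain ⟨hsum_u, htsum_u⟩ := lemA (c * r) M (by positivity) hM1 u hunn hu0 hun
  have hsumDu : Summable (fun n => D * u n) := hsum_u.mul_left D
  have hsumFabs : Summable (fun n => |F n|) :=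
    Summable.of_nonneg_of_le (fun n => abs_nonneg _) hFu hsumDu
  constructor
  · exact hsumFabs
  · rw [hz0]
    have hsumF : Summable F := summable_abs_iff.mp hsumFabs
    have step1 : |∑' n, F n| ≤ ∑' n, |F n| := by
      have := norm_tsum_le_tsum_norm (f := F) (by simpa [Real.norm_eq_abs] using hsumFabs)
      simpa [Real.norm_eq_abs] using this
    calc |∑' n, F n| ≤ ∑' n, |F n| := step1
      _ ≤ ∑' n, D * u n := Summable.tsum_le_tsum hFu hsumFabs hsumDu
      _ = D * ∑' n, u n := tsum_mul_left
      _ ≤ D * (2 + 260 * M) := mul_le_mul_of_nonneg_left htsum_u hDpos.le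
      _ = 2 / Real.pi * (2 + 260 * M) *
          Real.exp (-((sqz μ T 0).im) * r) / (4 * Real.pi * r) := by
          rw [hD]; ring
end

section
/- Let x and y be real numbers with 0 < x < 1, 0 < y < 1 and y ≠ 1/2. Then x·ln(x/y) + (1-x)·ln((1-x)/(1-y)) ≥ ( ln((1-y)/y) / (1-2y) ) · (x-y)² + (4/3) · ( x(1-x) - y(1-y) )². -/
open Real

/-- Weighted AM-GM: `A^(n+1) + n B^(n+1) ≥ (n+1) A B^n` for nonnegative reals. -/
lemma amgm_aux (A B : ℝ) (hA : 0 ≤ A) (hB : 0 ≤ B) :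
    ∀ n : ℕ, ((n : ℝ) + 1) * A * B ^ n ≤ A ^ (n + 1) + (n : ℝ) * B ^ (n + 1) := by
  intro n
  induction n with
  | zero => simp
  | succ n ih =>
    have key : (A - B) * (A ^ (n + 1) - B ^ (n + 1)) ≥ 0 := by
      rcases le_total A B with h | h
      · have h2 : A ^ (n + 1) ≤ B ^ (n + 1) := pow_le_pow_left₀ hA h (n + 1)
        nlinarith
      · have h2 : B ^ (n + 1) ≤ A ^ (n + 1) := pow_le_pow_left₀ hB h (n + 1)
        nlinarith
    have hE : 0 ≤ B * (A ^ (n + 1) + (n : ℝ) * B ^ (n + 1) - ((n : ℝ) + 1) * A * B ^ n) :=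
      mul_nonneg hB (by linarith)
    have expand : A ^ (n + 1 + 1) + ((n : ℝ) + 1) * B ^ (n + 1 + 1)
        - ((n : ℝ) + 1 + 1) * A * B ^ (n + 1)
        = B * (A ^ (n + 1) + (n : ℝ) * B ^ (n + 1) - ((n : ℝ) + 1) * A * B ^ n)
          + (A - B) * (A ^ (n + 1) - B ^ (n + 1)) := by
      rw [pow_succ A (n + 1), pow_succ B (n + 1), pow_succ B n]; ring
    push_cast
    linarith [expand, key, hE]

/-- The key inequality in symmetrized variables. -/
lemma key_ineq (s t : ℝ) (hs : |s| < 1) (ht : |t| < 1) (ht0 : t ≠ 0) :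
    (1 + s) * log (1 + s) + (1 - s) * log (1 - s)
      - ((1 + t) * log (1 + t) + (1 - t) * log (1 - t))
      - (s - t) * (log (1 + t) - log (1 - t))
      - (s - t) ^ 2 * ((log (1 + t) - log (1 - t)) / (2 * t))
      ≥ (s ^ 2 - t ^ 2) ^ 2 / 6 := by
  have hs1 : -1 < s := neg_lt_of_abs_lt hs
  have hs2 : s < 1 := lt_of_abs_lt hs
  have ht1 : -1 < t := neg_lt_of_abs_lt ht
  have ht2 : t < 1 := lt_of_abs_lt ht
  have hps : (0:ℝ) < 1 + s := by linarith
  have hms : (0:ℝ) < 1 - s := by linarith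
  have hpt : (0:ℝ) < 1 + t := by linarith
  have hmt : (0:ℝ) < 1 - t := by linarith
  have hs2abs : |s ^ 2| < 1 := by
    rw [abs_of_nonneg (sq_nonneg s)]; nlinarith [abs_nonneg s, sq_abs s]
  have ht2abs : |t ^ 2| < 1 := by
    rw [abs_of_nonneg (sq_nonneg t)]; nlinarith [abs_nonneg t, sq_abs t]
  -- series pieces
  have hAs := Real.hasSum_log_sub_log_of_abs_lt_one hs
  have hAt := Real.hasSum_log_sub_log_of_abs_lt_one ht
  have hBs := Real.hasSum_pow_div_log_of_abs_lt_one hs2abs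
  have hBt := Real.hasSum_pow_div_log_of_abs_lt_one ht2abs
  -- combined series
  have hf :
      HasSum (fun n : ℕ =>
        (s * ((2 : ℝ) * (1 / (2 * n + 1)) * s ^ (2 * n + 1)) - (s ^ 2) ^ (n + 1) / (n + 1))
        - (t * ((2 : ℝ) * (1 / (2 * n + 1)) * t ^ (2 * n + 1)) - (t ^ 2) ^ (n + 1) / (n + 1))
        - (s - t) * ((2 : ℝ) * (1 / (2 * n + 1)) * t ^ (2 * n + 1))
        - ((s - t) ^ 2 / (2 * t)) * ((2 : ℝ) * (1 / (2 * n + 1)) * t ^ (2 * n + 1)))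
        ((s * (log (1 + s) - log (1 - s)) - -log (1 - s ^ 2))
          - (t * (log (1 + t) - log (1 - t)) - -log (1 - t ^ 2))
          - (s - t) * (log (1 + t) - log (1 - t))
          - ((s - t) ^ 2 / (2 * t)) * (log (1 + t) - log (1 - t))) :=
    (((((hAs.mul_left s).sub hBs).sub ((hAt.mul_left t).sub hBt)).sub
        (hAt.mul_left (s - t))).sub (hAt.mul_left ((s - t) ^ 2 / (2 * t))))
  -- each term is nonnegative
  have hnonneg : ∀ n : ℕ,
      0 ≤ (s * ((2 : ℝ) * (1 / (2 * n + 1)) * s ^ (2 * n + 1)) - (s ^ 2) ^ (n + 1) / (n + 1))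
        - (t * ((2 : ℝ) * (1 / (2 * n + 1)) * t ^ (2 * n + 1)) - (t ^ 2) ^ (n + 1) / (n + 1))
        - (s - t) * ((2 : ℝ) * (1 / (2 * n + 1)) * t ^ (2 * n + 1))
        - ((s - t) ^ 2 / (2 * t)) * ((2 : ℝ) * (1 / (2 * n + 1)) * t ^ (2 * n + 1)) := by
    intro n
    have hd1 : (0:ℝ) < 2 * n + 1 := by positivity
    have hd2 : (0:ℝ) < (n : ℝ) + 1 := by positivity
    have hps2n1 : s ^ (2 * n + 1) = s * (s ^ 2) ^ n := by
      rw [pow_succ, pow_mul]; ring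
    have hpt2n1 : t ^ (2 * n + 1) = t * (t ^ 2) ^ n := by
      rw [pow_succ, pow_mul]; ring
    have heq : (s * ((2 : ℝ) * (1 / (2 * n + 1)) * s ^ (2 * n + 1)) - (s ^ 2) ^ (n + 1) / (n + 1))
        - (t * ((2 : ℝ) * (1 / (2 * n + 1)) * t ^ (2 * n + 1)) - (t ^ 2) ^ (n + 1) / (n + 1))
        - (s - t) * ((2 : ℝ) * (1 / (2 * n + 1)) * t ^ (2 * n + 1))
        - ((s - t) ^ 2 / (2 * t)) * ((2 : ℝ) * (1 / (2 * n + 1)) * t ^ (2 * n + 1))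
        = ((s ^ 2) ^ (n + 1) + (n : ℝ) * (t ^ 2) ^ (n + 1) - ((n : ℝ) + 1) * s ^ 2 * (t ^ 2) ^ n)
            / (((n : ℝ) + 1) * (2 * n + 1)) := by
      rw [hps2n1, hpt2n1]
      have h1 : (t^2)^(n+1) = t^2 * (t^2)^n := by rw [pow_succ]; ring
      have h2 : (s^2)^(n+1) = s^2 * (s^2)^n := by rw [pow_succ]; ring
      rw [h1, h2]
      field_simp
      ring
    rw [heq]
    apply div_nonneg _ (by positivity)
    have := amgm_aux (s ^ 2) (t ^ 2) (sq_nonneg s) (sq_nonneg t) n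
    linarith
  -- the sum dominates its term at n = 1
  have hge := le_hasSum hf 1 (fun j _ => hnonneg j)
  -- compute the term at n = 1
  have hterm1 : (s * ((2 : ℝ) * (1 / (2 * (1:ℕ) + 1)) * s ^ (2 * 1 + 1))
        - (s ^ 2) ^ (1 + 1) / ((1:ℕ) + 1))
      - (t * ((2 : ℝ) * (1 / (2 * (1:ℕ) + 1)) * t ^ (2 * 1 + 1))
        - (t ^ 2) ^ (1 + 1) / ((1:ℕ) + 1))
      - (s - t) * ((2 : ℝ) * (1 / (2 * (1:ℕ) + 1)) * t ^ (2 * 1 + 1))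
      - ((s - t) ^ 2 / (2 * t)) * ((2 : ℝ) * (1 / (2 * (1:ℕ) + 1)) * t ^ (2 * 1 + 1))
      = (s ^ 2 - t ^ 2) ^ 2 / 6 := by
    push_cast
    field_simp
    ring
  -- identify the sum with the desired expression
  have hlogs : log (1 - s ^ 2) = log (1 + s) + log (1 - s) := by
    rw [show (1:ℝ) - s ^ 2 = (1 + s) * (1 - s) by ring, Real.log_mul hps.ne' hms.ne']
  have hlogt : log (1 - t ^ 2) = log (1 + t) + log (1 - t) := by
    rw [show (1:ℝ) - t ^ 2 = (1 + t) * (1 - t) by ring, Real.log_mul hpt.ne' hmt.ne']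
  have hval : (s * (log (1 + s) - log (1 - s)) - -log (1 - s ^ 2))
      - (t * (log (1 + t) - log (1 - t)) - -log (1 - t ^ 2))
      - (s - t) * (log (1 + t) - log (1 - t))
      - ((s - t) ^ 2 / (2 * t)) * (log (1 + t) - log (1 - t))
      = (1 + s) * log (1 + s) + (1 - s) * log (1 - s)
        - ((1 + t) * log (1 + t) + (1 - t) * log (1 - t))
        - (s - t) * (log (1 + t) - log (1 - t))
        - (s - t) ^ 2 * ((log (1 + t) - log (1 - t)) / (2 * t)) := by
    rw [hlogs, hlogt]; ring
  rw [hterm1, hval] at hge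
  exact hge

/-- The elementary two-point inequality underlying the relative entropy lower bound
(Lemma 6.1 of Frank–Hainzl–Seiringer–Solovej, *Microscopic Derivation of Ginzburg-Landau
Theory*). -/
theorem two_point_entropy_inequality (x y : ℝ) (hx0 : 0 < x) (hx1 : x < 1)
    (hy0 : 0 < y) (hy1 : y < 1) (hy : y ≠ 1/2) :
    x * Real.log (x / y) + (1 - x) * Real.log ((1 - x) / (1 - y)) ≥
      (Real.log ((1 - y) / y) / (1 - 2 * y)) * (x - y) ^ 2
        + (4 / 3) * (x * (1 - x) - y * (1 - y)) ^ 2 := by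
  set s := 2 * x - 1 with hs_def
  set t := 2 * y - 1 with ht_def
  have hs : |s| < 1 := by rw [abs_lt]; constructor <;> [linarith; linarith]
  have ht : |t| < 1 := by rw [abs_lt]; constructor <;> [linarith; linarith]
  have ht0 : t ≠ 0 := by
    intro h
    apply hy
    have : 2 * y - 1 = 0 := h
    linarith
  have key := key_ineq s t hs ht ht0
  -- rewrite the logs in the key inequality in terms of x, y
  have e1 : (1 : ℝ) + s = 2 * x := by rw [hs_def]; ring
  have e2 : (1 : ℝ) - s = 2 * (1 - x) := by rw [hs_def]; ring
  have e3 : (1 : ℝ) + t = 2 * y := by rw [ht_def]; ring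
  have e4 : (1 : ℝ) - t = 2 * (1 - y) := by rw [ht_def]; ring
  have l1 : log (1 + s) = log 2 + log x := by
    rw [e1, Real.log_mul two_ne_zero hx0.ne']
  have l2 : log (1 - s) = log 2 + log (1 - x) := by
    rw [e2, Real.log_mul two_ne_zero (by linarith : (1:ℝ) - x ≠ 0)]
  have l3 : log (1 + t) = log 2 + log y := by
    rw [e3, Real.log_mul two_ne_zero hy0.ne']
  have l4 : log (1 - t) = log 2 + log (1 - y) := by
    rw [e4, Real.log_mul two_ne_zero (by linarith : (1:ℝ) - y ≠ 0)]
  rw [l1, l2, l3, l4] at key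
  -- rewrite the logs in the goal
  rw [ge_iff_le, Real.log_div hx0.ne' hy0.ne',
    Real.log_div (by linarith : (1:ℝ) - x ≠ 0) (by linarith : (1:ℝ) - y ≠ 0),
    Real.log_div (by linarith : (1:ℝ) - y ≠ 0) hy0.ne']
  have h2t : (1 : ℝ) - 2 * y ≠ 0 := by
    intro h; apply hy; linarith
  have hident :
      x * (log x - log y) + (1 - x) * (log (1 - x) - log (1 - y))
        - ((log (1 - y) - log y) / (1 - 2 * y) * (x - y) ^ 2
            + 4 / 3 * (x * (1 - x) - y * (1 - y)) ^ 2)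
      = ((((1 + s) * (log 2 + log x) + (1 - s) * (log 2 + log (1 - x))
          - ((1 + t) * (log 2 + log y) + (1 - t) * (log 2 + log (1 - y)))
          - (s - t) * ((log 2 + log y) - (log 2 + log (1 - y)))
          - (s - t) ^ 2 * (((log 2 + log y) - (log 2 + log (1 - y))) / (2 * t)))
        - (s ^ 2 - t ^ 2) ^ 2 / 6)) / 2 := by
    rw [hs_def, ht_def]
    rw [show (2:ℝ) * (2 * y - 1) = -(2 * (1 - 2 * y)) by ring, div_neg]
    field_simp
    ring
  linarith [key, hident.ge, hident.le]
end

section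
/- Let A and B be n×n Hermitian matrices with 0 ≤ A ≤ 1 and 0 ≤ B ≤ 1 (in the sense of positive semidefiniteness of A, 1-A, B, 1-B). Then ‖A(1-A) - B(1-B)‖_F ≤ ‖A - B‖_F, where ‖·‖_F denotes the Frobenius (Hilbert–Schmidt) norm ‖M‖_F = (Tr M†M)^{1/2}. -/
open Matrix
open scoped ComplexOrder

/-- Trace formula `Tr(D_a M D_b Mᴴ) = ∑ᵢⱼ aᵢ bⱼ ‖Mᵢⱼ‖²` for real diagonal matrices. -/
lemma trace_diag_conj (n : ℕ) (M : Matrix (Fin n) (Fin n) ℂ) (a b : Fin n → ℝ) :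
    (trace (diagonal (fun i => (a i : ℂ)) * M * diagonal (fun i => (b i : ℂ)) * Mᴴ)).re
      = ∑ i, ∑ j, a i * b j * ‖M i j‖^2 := by
  rw [Matrix.trace, Complex.re_sum]
  refine Finset.sum_congr rfl fun i _ => ?_
  rw [Matrix.diag, Matrix.mul_apply, Complex.re_sum]
  refine Finset.sum_congr rfl fun j _ => ?_
  rw [Matrix.mul_diagonal, Matrix.diagonal_mul, Matrix.conjTranspose_apply]
  have : (↑(a i) * M i j * ↑(b j) * star (M i j) : ℂ)
      = ((a i * b j : ℝ) : ℂ) * (M i j * star (M i j)) := by push_cast; ring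
  rw [this, Complex.star_def, Complex.mul_conj, ← Complex.ofReal_mul, Complex.ofReal_re,
    Complex.normSq_eq_norm_sq]

/-- Cross-term trace formula for conjugated diagonal matrices. -/
lemma trace_cross (n : ℕ) (U V : Matrix (Fin n) (Fin n) ℂ) (a b : Fin n → ℝ) :
    (trace ((U * diagonal (fun i => (a i : ℂ)) * Uᴴ) * (V * diagonal (fun i => (b i : ℂ)) * Vᴴ))).re
      = ∑ i, ∑ j, a i * b j * ‖(Uᴴ * V) i j‖^2 := by
  have h1 : (U * diagonal (fun i => (a i : ℂ)) * Uᴴ) * (V * diagonal (fun i => (b i : ℂ)) * Vᴴ)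
      = U * (diagonal (fun i => (a i : ℂ)) * Uᴴ * V * diagonal (fun i => (b i : ℂ)) * Vᴴ) := by
    simp [Matrix.mul_assoc]
  rw [h1, Matrix.trace_mul_comm]
  have h2 : (diagonal (fun i => (a i : ℂ)) * Uᴴ * V * diagonal (fun i => (b i : ℂ)) * Vᴴ) * U
      = diagonal (fun i => (a i : ℂ)) * (Uᴴ * V) * diagonal (fun i => (b i : ℂ)) * (Uᴴ * V)ᴴ := by
    simp [Matrix.conjTranspose_mul, Matrix.mul_assoc]
  rw [h2, trace_diag_conj]

lemma norm_sq_one_apply (n : ℕ) (i j : Fin n) :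
    ‖(1 : Matrix (Fin n) (Fin n) ℂ) i j‖^2 = if i = j then (1:ℝ) else 0 := by
  by_cases h : i = j <;> simp [Matrix.one_apply, h]

lemma row_sum_one (n : ℕ) (W : Matrix (Fin n) (Fin n) ℂ) (hW : W * Wᴴ = 1) (i : Fin n) :
    ∑ j, ‖W i j‖^2 = 1 := by
  have h1 : ((W * Wᴴ) i i).re = ∑ j, ‖W i j‖^2 := by
    rw [Matrix.mul_apply, Complex.re_sum]
    refine Finset.sum_congr rfl fun j _ => ?_
    rw [Matrix.conjTranspose_apply, Complex.star_def, Complex.mul_conj,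
      Complex.normSq_eq_norm_sq]
    exact Complex.ofReal_re _
  rw [← h1, hW]
  simp [Matrix.one_apply]

lemma col_sum_one (n : ℕ) (W : Matrix (Fin n) (Fin n) ℂ) (hW : Wᴴ * W = 1) (j : Fin n) :
    ∑ i, ‖W i j‖^2 = 1 := by
  have := row_sum_one n Wᴴ (by simpa using hW) j
  simpa [Matrix.conjTranspose_apply] using this

/-- For unitaries `U`, `V` and real diagonal data, the squared Frobenius distance of the
conjugated diagonal matrices is `∑ᵢⱼ ‖(UᴴV)ᵢⱼ‖² (aᵢ - bⱼ)²`. -/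
lemma trace_diff (n : ℕ) (U V : Matrix (Fin n) (Fin n) ℂ)
    (hU1 : Uᴴ * U = 1) (hU2 : U * Uᴴ = 1) (hV1 : Vᴴ * V = 1) (hV2 : V * Vᴴ = 1)
    (a b : Fin n → ℝ) :
    (trace ((U * diagonal (fun i => (a i : ℂ)) * Uᴴ - V * diagonal (fun i => (b i : ℂ)) * Vᴴ)ᴴ *
        (U * diagonal (fun i => (a i : ℂ)) * Uᴴ - V * diagonal (fun i => (b i : ℂ)) * Vᴴ))).re
      = ∑ i, ∑ j, ‖(Uᴴ * V) i j‖^2 * (a i - b j)^2 := by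
  set X := U * diagonal (fun i => (a i : ℂ)) * Uᴴ with hX
  set Y := V * diagonal (fun i => (b i : ℂ)) * Vᴴ with hY
  have hsd : ∀ (c : Fin n → ℝ), (diagonal (fun i => (c i : ℂ)))ᴴ = diagonal (fun i => (c i : ℂ)) := by
    intro c
    rw [Matrix.diagonal_conjTranspose]
    have : (star fun i => ((c i : ℂ))) = fun i => ((c i : ℂ)) := by
      funext i
      simp [Pi.star_apply, Complex.star_def, Complex.conj_ofReal]
    rw [this]
  have hXh : Xᴴ = X := by
    rw [hX, Matrix.conjTranspose_mul, Matrix.conjTranspose_mul, hsd,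
      Matrix.conjTranspose_conjTranspose, Matrix.mul_assoc]
  have hYh : Yᴴ = Y := by
    rw [hY, Matrix.conjTranspose_mul, Matrix.conjTranspose_mul, hsd,
      Matrix.conjTranspose_conjTranspose, Matrix.mul_assoc]
  have hexp : (X - Y)ᴴ * (X - Y) = X * X - X * Y - (Y * X - Y * Y) := by
    rw [Matrix.conjTranspose_sub, hXh, hYh, Matrix.sub_mul, Matrix.mul_sub, Matrix.mul_sub]
  rw [hexp, Matrix.trace_sub, Matrix.trace_sub, Matrix.trace_sub, Complex.sub_re,
    Complex.sub_re, Complex.sub_re]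
  have hXX := trace_cross n U U a a
  have hXY := trace_cross n U V a b
  have hYX := trace_cross n V U b a
  have hYY := trace_cross n V V b b
  rw [hX, hY] at *
  rw [hXX, hXY, hYX, hYY, hU1, hV1]
  have hdelta : ∀ (c : Fin n → ℝ),
      (∑ i, ∑ j, c i * c j * ‖(1 : Matrix (Fin n) (Fin n) ℂ) i j‖^2) = ∑ i, c i ^ 2 := by
    intro c
    refine Finset.sum_congr rfl fun i _ => ?_
    rw [Finset.sum_eq_single i]
    · rw [norm_sq_one_apply]; simp [sq]
    · intro j _ hj; rw [norm_sq_one_apply]; simp [(Ne.symm hj : ¬ i = j)]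
    · simp
  rw [hdelta a, hdelta b]
  have hVU : ∀ i j, ‖(Vᴴ * U) i j‖^2 = ‖(Uᴴ * V) j i‖^2 := by
    intro i j
    have : Vᴴ * U = (Uᴴ * V)ᴴ := by simp [Matrix.conjTranspose_mul]
    rw [this, Matrix.conjTranspose_apply, norm_star]
  have hYXsum : (∑ i, ∑ j, b i * a j * ‖(Vᴴ * U) i j‖^2)
      = ∑ i, ∑ j, a i * b j * ‖(Uᴴ * V) i j‖^2 := by
    rw [Finset.sum_comm]
    refine Finset.sum_congr rfl fun i _ => Finset.sum_congr rfl fun j _ => ?_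
    rw [hVU]; ring
  rw [hYXsum]
  have hrow := row_sum_one n (Uᴴ * V) (by
    rw [Matrix.conjTranspose_mul, Matrix.conjTranspose_conjTranspose, Matrix.mul_assoc,
      ← Matrix.mul_assoc V, hV2, Matrix.one_mul, hU1])
  have hcol := col_sum_one n (Uᴴ * V) (by
    rw [Matrix.conjTranspose_mul, Matrix.conjTranspose_conjTranspose, Matrix.mul_assoc,
      ← Matrix.mul_assoc U, hU2, Matrix.one_mul, hV1])
  have hrhs : (∑ i, ∑ j, ‖(Uᴴ * V) i j‖^2 * (a i - b j)^2)
      = (∑ i, a i ^ 2) + (∑ j, b j ^ 2) - 2 * ∑ i, ∑ j, a i * b j * ‖(Uᴴ * V) i j‖^2 := by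
    have e1 : ∀ i j, ‖(Uᴴ * V) i j‖^2 * (a i - b j)^2
        = a i ^2 * ‖(Uᴴ * V) i j‖^2 + b j ^2 * ‖(Uᴴ * V) i j‖^2
          - 2 * (a i * b j * ‖(Uᴴ * V) i j‖^2) := by intro i j; ring
    simp only [e1, Finset.sum_sub_distrib, Finset.sum_add_distrib]
    congr 1
    · congr 1
      · refine Finset.sum_congr rfl fun i _ => ?_
        rw [← Finset.mul_sum, hrow, mul_one]
      · rw [Finset.sum_comm]
        refine Finset.sum_congr rfl fun j _ => ?_
        rw [← Finset.mul_sum, hcol, mul_one]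
    · simp only [Finset.mul_sum]
  rw [hrhs]
  ring

lemma conj_quad (n : ℕ) (U : Matrix (Fin n) (Fin n) ℂ) (hU1 : Uᴴ * U = 1) (d : Fin n → ℂ) :
    (U * diagonal d * Uᴴ) * (1 - U * diagonal d * Uᴴ)
      = U * diagonal (fun i => d i * (1 - d i)) * Uᴴ := by
  have hsq : (U * diagonal d * Uᴴ) * (U * diagonal d * Uᴴ)
      = U * diagonal (fun i => d i * d i) * Uᴴ := by
    have h1 : (U * diagonal d * Uᴴ) * (U * diagonal d * Uᴴ)
        = U * (diagonal d * ((Uᴴ * U) * (diagonal d * Uᴴ))) := by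
      simp only [Matrix.mul_assoc]
    rw [h1, hU1, Matrix.one_mul, ← Matrix.mul_assoc, ← Matrix.mul_assoc,
      Matrix.mul_assoc U, Matrix.diagonal_mul_diagonal]
  rw [Matrix.mul_sub, Matrix.mul_one, hsq, ← Matrix.sub_mul, ← Matrix.mul_sub,
    Matrix.diagonal_sub]
  have he : (fun i => d i - d i * d i) = fun i => d i * (1 - d i) := by funext i; ring
  rw [he]

lemma diag_conj_eq (n : ℕ) (U A : Matrix (Fin n) (Fin n) ℂ) (hU1 : Uᴴ * U = 1)
    (d : Fin n → ℂ) (hspec : A = U * diagonal d * Uᴴ) :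
    Uᴴ * (1 - A) * U = diagonal (fun i => 1 - d i) := by
  rw [hspec, Matrix.mul_sub, Matrix.mul_one, Matrix.sub_mul, hU1]
  have : Uᴴ * (U * diagonal d * Uᴴ) * U = diagonal d := by
    have h1 : Uᴴ * (U * diagonal d * Uᴴ) * U = (Uᴴ * U) * diagonal d * (Uᴴ * U) := by
      simp only [Matrix.mul_assoc]
    rw [h1, hU1, Matrix.one_mul, Matrix.mul_one]
  rw [this, ← Matrix.diagonal_one, Matrix.diagonal_sub]

/-- Eigenvalues of a Hermitian matrix `A` with `1 - A` positive semidefinite are `≤ 1`. -/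
lemma eig_mem (n : ℕ) (U A : Matrix (Fin n) (Fin n) ℂ) (hU1 : Uᴴ * U = 1) (a : Fin n → ℝ)
    (hspec : A = U * diagonal (fun i => (a i : ℂ)) * Uᴴ) (hA1 : (1 - A).PosSemidef) (i : Fin n) :
    a i ≤ 1 := by
  have hp : (Uᴴ * (1 - A) * U).PosSemidef := hA1.conjTranspose_mul_mul_same U
  rw [diag_conj_eq n U A hU1 _ hspec] at hp
  have := (Matrix.posSemidef_diagonal_iff.mp hp) i
  have h2 : ((1 - a i : ℝ) : ℂ) = 1 - (a i : ℂ) := by push_cast; ring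
  rw [← h2] at this
  have := Complex.zero_le_real.mp this
  linarith

/-- For Hermitian matrices `A`, `B` with spectrum in `[0,1]`, the Frobenius
(Hilbert–Schmidt) distance between `A(1-A)` and `B(1-B)` is at most that between `A` and
`B` (used in Section 6, Step 1 of Frank–Hainzl–Seiringer–Solovej; a consequence of
Klein's inequality). -/
theorem hilbert_schmidt_contraction (n : ℕ) (A B : Matrix (Fin n) (Fin n) ℂ)
    (hA : A.IsHermitian) (hB : B.IsHermitian)
    (hA0 : A.PosSemidef) (hA1 : (1 - A).PosSemidef)
    (hB0 : B.PosSemidef) (hB1 : (1 - B).PosSemidef) :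
    Real.sqrt (Matrix.trace
        ((A * (1 - A) - B * (1 - B))ᴴ * (A * (1 - A) - B * (1 - B)))).re
      ≤ Real.sqrt (Matrix.trace ((A - B)ᴴ * (A - B))).re := by
  set U : Matrix (Fin n) (Fin n) ℂ := (hA.eigenvectorUnitary : Matrix (Fin n) (Fin n) ℂ) with hUdef
  set V : Matrix (Fin n) (Fin n) ℂ := (hB.eigenvectorUnitary : Matrix (Fin n) (Fin n) ℂ) with hVdef
  set a : Fin n → ℝ := hA.eigenvalues with hadef
  set b : Fin n → ℝ := hB.eigenvalues with hbdef
  have hU1 : Uᴴ * U = 1 := by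
    have := Matrix.mem_unitaryGroup_iff'.mp hA.eigenvectorUnitary.2
    simpa [Matrix.star_eq_conjTranspose] using this
  have hU2 : U * Uᴴ = 1 := by
    have := Matrix.mem_unitaryGroup_iff.mp hA.eigenvectorUnitary.2
    simpa [Matrix.star_eq_conjTranspose] using this
  have hV1 : Vᴴ * V = 1 := by
    have := Matrix.mem_unitaryGroup_iff'.mp hB.eigenvectorUnitary.2
    simpa [Matrix.star_eq_conjTranspose] using this
  have hV2 : V * Vᴴ = 1 := by
    have := Matrix.mem_unitaryGroup_iff.mp hB.eigenvectorUnitary.2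
    simpa [Matrix.star_eq_conjTranspose] using this
  have hspecA : A = U * diagonal (fun i => (a i : ℂ)) * Uᴴ := by
    have := hA.spectral_theorem
    exact this
  have hspecB : B = V * diagonal (fun i => (b i : ℂ)) * Vᴴ := by
    have := hB.spectral_theorem
    exact this
  have ha0 : ∀ i, 0 ≤ a i := fun i => hA0.eigenvalues_nonneg i
  have hb0 : ∀ i, 0 ≤ b i := fun i => hB0.eigenvalues_nonneg i
  have ha1 : ∀ i, a i ≤ 1 := fun i => eig_mem n U A hU1 a hspecA hA1 i
  have hb1 : ∀ i, b i ≤ 1 := fun i => eig_mem n V B hV1 b hspecB hB1 i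
  have hfA : A * (1 - A) = U * diagonal (fun i => ((a i * (1 - a i) : ℝ) : ℂ)) * Uᴴ := by
    rw [hspecA, conj_quad n U hU1]
    have : (fun i => ((a i : ℂ)) * (1 - (a i : ℂ))) = fun i => ((a i * (1 - a i) : ℝ) : ℂ) := by
      funext i; push_cast; ring
    rw [this]
  have hfB : B * (1 - B) = V * diagonal (fun i => ((b i * (1 - b i) : ℝ) : ℂ)) * Vᴴ := by
    rw [hspecB, conj_quad n V hV1]
    have : (fun i => ((b i : ℂ)) * (1 - (b i : ℂ))) = fun i => ((b i * (1 - b i) : ℝ) : ℂ) := by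
      funext i; push_cast; ring
    rw [this]
  have e1 : (Matrix.trace
        ((A * (1 - A) - B * (1 - B))ᴴ * (A * (1 - A) - B * (1 - B)))).re
      = ∑ i, ∑ j, ‖(Uᴴ * V) i j‖^2 * (a i * (1 - a i) - b j * (1 - b j))^2 := by
    rw [hfA, hfB]
    exact trace_diff n U V hU1 hU2 hV1 hV2 (fun i => a i * (1 - a i)) (fun j => b j * (1 - b j))
  have e2 : (Matrix.trace ((A - B)ᴴ * (A - B))).re
      = ∑ i, ∑ j, ‖(Uᴴ * V) i j‖^2 * (a i - b j)^2 := by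
    rw [hspecA, hspecB]
    exact trace_diff n U V hU1 hU2 hV1 hV2 a b
  rw [e1, e2]
  apply Real.sqrt_le_sqrt
  refine Finset.sum_le_sum fun i _ => Finset.sum_le_sum fun j _ => ?_
  refine mul_le_mul_of_nonneg_left ?_ (by positivity)
  have h1 := ha0 i; have h2 := ha1 i; have h3 := hb0 j; have h4 := hb1 j
  nlinarith [mul_nonneg (mul_nonneg (sq_nonneg (a i - b j)) (by linarith : (0:ℝ) ≤ a i + b j))
    (by linarith : (0:ℝ) ≤ 2 - a i - b j), sq_nonneg (a i - b j)]
end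

section
/- Let 𝓗 be a complex Hilbert space, let φ ∈ 𝓗 be a unit vector, let κ ≥ 0, and let A be a bounded self-adjoint operator on 𝓗 satisfying A ≥ κ(1 - P), where P = |φ⟩⟨φ| is the orthogonal projection onto the span of φ (i.e. ⟨ψ, Aψ⟩ ≥ κ(‖ψ‖² - |⟨φ,ψ⟩|²) for all ψ). Let U be a unitary operator on 𝓗. Then U A U* + U* A U ≥ κ · (1 - |⟨φ, U²φ⟩|) · 1, i.e. ⟨ψ, (UAU* + U*AU)ψ⟩ ≥ κ(1 - |⟨φ, U²φ⟩|)‖ψ‖² for all ψ ∈ 𝓗. -/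
open scoped InnerProductSpace

/-- For unit vectors `ψ₁, ψ₂`, the sum of the two rank-one projections has norm at most
`1 + |⟨ψ₁, ψ₂⟩|`. -/
lemma two_projection_bound {H : Type*} [NormedAddCommGroup H] [InnerProductSpace ℂ H]
    (ψ₁ ψ₂ ψ : H) (h1 : ‖ψ₁‖ = 1) (h2 : ‖ψ₂‖ = 1) :
    ‖(inner ℂ ψ₁ ψ : ℂ)‖ ^ 2 + ‖(inner ℂ ψ₂ ψ : ℂ)‖ ^ 2 ≤
      (1 + ‖(inner ℂ ψ₁ ψ₂ : ℂ)‖) * ‖ψ‖ ^ 2 := by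
  set a : ℂ := inner ℂ ψ₁ ψ with ha
  set b : ℂ := inner ℂ ψ₂ ψ with hb
  set v : H := a • ψ₁ + b • ψ₂ with hv
  set t : ℝ := ‖(inner ℂ ψ₁ ψ₂ : ℂ)‖ with ht
  have ht0 : 0 ≤ t := norm_nonneg _
  have hinner : (inner ℂ v ψ : ℂ) = (‖a‖ ^ 2 + ‖b‖ ^ 2 : ℝ) := by
    rw [hv, inner_add_left, inner_smul_left, inner_smul_left, ← ha, ← hb]
    have h1 : (starRingEnd ℂ) a * a = (‖a‖ ^ 2 : ℝ) := by
      rw [← Complex.normSq_eq_conj_mul_self]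
      norm_cast
      rw [Complex.normSq_eq_norm_sq]
    have h2 : (starRingEnd ℂ) b * b = (‖b‖ ^ 2 : ℝ) := by
      rw [← Complex.normSq_eq_conj_mul_self]
      norm_cast
      rw [Complex.normSq_eq_norm_sq]
    rw [h1, h2]
    push_cast
    ring
  have hCS : ‖(inner ℂ v ψ : ℂ)‖ ≤ ‖v‖ * ‖ψ‖ := norm_inner_le_norm v ψ
  have hnorm_inner : ‖(inner ℂ v ψ : ℂ)‖ = ‖a‖ ^ 2 + ‖b‖ ^ 2 := by
    rw [hinner]
    rw [Complex.norm_real]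
    exact abs_of_nonneg (by positivity)
  have hvsq : ‖v‖ ^ 2 ≤ (‖a‖ ^ 2 + ‖b‖ ^ 2) * (1 + t) := by
    have hexp : ‖v‖ ^ 2 = ‖a • ψ₁‖ ^ 2 + 2 * (inner ℂ (a • ψ₁) (b • ψ₂) : ℂ).re + ‖b • ψ₂‖ ^ 2 := by
      rw [hv]
      exact norm_add_sq (𝕜 := ℂ) _ _
    have hre : (inner ℂ (a • ψ₁) (b • ψ₂) : ℂ).re ≤ ‖a‖ * ‖b‖ * t := by
      calc (inner ℂ (a • ψ₁) (b • ψ₂) : ℂ).re ≤ ‖(inner ℂ (a • ψ₁) (b • ψ₂) : ℂ)‖ :=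
            Complex.re_le_norm _
        _ = ‖a‖ * ‖b‖ * t := by
            rw [inner_smul_left, inner_smul_right]
            rw [norm_mul, norm_mul, RCLike.norm_conj, ← ht]
            ring
    have hna : ‖a • ψ₁‖ = ‖a‖ := by rw [norm_smul, h1, mul_one]
    have hnb : ‖b • ψ₂‖ = ‖b‖ := by rw [norm_smul, h2, mul_one]
    rw [hexp, hna, hnb]
    nlinarith [sq_nonneg (‖a‖ - ‖b‖), ht0, norm_nonneg a, norm_nonneg b]
  have key : (‖a‖ ^ 2 + ‖b‖ ^ 2) ^ 2 ≤ (‖a‖ ^ 2 + ‖b‖ ^ 2) * ((1 + t) * ‖ψ‖ ^ 2) := by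
    calc (‖a‖ ^ 2 + ‖b‖ ^ 2) ^ 2 = ‖(inner ℂ v ψ : ℂ)‖ ^ 2 := by rw [hnorm_inner]
      _ ≤ (‖v‖ * ‖ψ‖) ^ 2 := by
          apply pow_le_pow_left₀ (norm_nonneg _) hCS
      _ = ‖v‖ ^ 2 * ‖ψ‖ ^ 2 := by ring
      _ ≤ (‖a‖ ^ 2 + ‖b‖ ^ 2) * (1 + t) * ‖ψ‖ ^ 2 := by
          apply mul_le_mul_of_nonneg_right hvsq (by positivity)
      _ = (‖a‖ ^ 2 + ‖b‖ ^ 2) * ((1 + t) * ‖ψ‖ ^ 2) := by ring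
  rcases eq_or_lt_of_le (by positivity : (0:ℝ) ≤ ‖a‖ ^ 2 + ‖b‖ ^ 2) with h0 | h0
  · rw [← h0]; positivity
  · have := le_of_mul_le_mul_left (by nlinarith : (‖a‖ ^ 2 + ‖b‖ ^ 2) * (‖a‖ ^ 2 + ‖b‖ ^ 2) ≤ (‖a‖ ^ 2 + ‖b‖ ^ 2) * ((1 + t) * ‖ψ‖ ^ 2)) h0
    linarith

/-- Abstract operator-theoretic core of Lemma 6.3 of Frank–Hainzl–Seiringer–Solovej: if a
bounded self-adjoint operator `A` satisfies `A ≥ κ(1 - |φ⟩⟨φ|)` for a unit vector `φ`,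
then for any unitary `U`, `U A U* + U* A U ≥ κ (1 - |⟨φ, U²φ⟩|)`. -/
theorem unitary_conjugation_gap_bound
    {H : Type*} [NormedAddCommGroup H] [InnerProductSpace ℂ H] [CompleteSpace H]
    (φ : H) (hφ : ‖φ‖ = 1) (κ : ℝ) (hκ : 0 ≤ κ)
    (A : H →L[ℂ] H) (hA : IsSelfAdjoint A)
    (hgap : ∀ ψ : H, κ * (‖ψ‖ ^ 2 - ‖(inner ℂ φ ψ : ℂ)‖ ^ 2) ≤ (inner ℂ ψ (A ψ) : ℂ).re)
    (U : H →L[ℂ] H) (hU : U ∈ unitary (H →L[ℂ] H)) :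
    ∀ ψ : H, κ * (1 - ‖(inner ℂ φ (U (U φ)) : ℂ)‖) * ‖ψ‖ ^ 2 ≤
      (inner ℂ ψ ((U * A * star U + star U * A * U) ψ) : ℂ).re := by
  intro ψ
  have hU1 : star U * U = 1 := hU.1
  have hU2 : U * star U = 1 := hU.2
  have hadj : ContinuousLinearMap.adjoint U = star U := (ContinuousLinearMap.star_eq_adjoint U).symm
  have hadj' : ContinuousLinearMap.adjoint (star U) = U := by
    rw [ContinuousLinearMap.star_eq_adjoint, ContinuousLinearMap.adjoint_adjoint]
  -- norms preserved
  have hnormU : ∀ x : H, ‖U x‖ = ‖x‖ := by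
    intro x
    have : (inner ℂ (U x) (U x) : ℂ) = inner ℂ x x := by
      rw [← ContinuousLinearMap.adjoint_inner_right, hadj, ← ContinuousLinearMap.mul_apply, hU1,
        ContinuousLinearMap.one_apply]
    rw [inner_self_eq_norm_sq_to_K (𝕜 := ℂ), inner_self_eq_norm_sq_to_K (𝕜 := ℂ)] at this
    have h2 : ‖U x‖ ^ 2 = ‖x‖ ^ 2 := by exact_mod_cast this
    nlinarith [norm_nonneg (U x), norm_nonneg x]
  have hnormUs : ∀ x : H, ‖(star U) x‖ = ‖x‖ := by
    intro x
    have : (inner ℂ ((star U) x) ((star U) x) : ℂ) = inner ℂ x x := by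
      rw [← ContinuousLinearMap.adjoint_inner_right, hadj', ← ContinuousLinearMap.mul_apply, hU2,
        ContinuousLinearMap.one_apply]
    rw [inner_self_eq_norm_sq_to_K (𝕜 := ℂ), inner_self_eq_norm_sq_to_K (𝕜 := ℂ)] at this
    have h2 : ‖(star U) x‖ ^ 2 = ‖x‖ ^ 2 := by exact_mod_cast this
    nlinarith [norm_nonneg ((star U) x), norm_nonneg x]
  set a : ℝ := ‖(inner ℂ (U φ) ψ : ℂ)‖ with haa
  set b : ℝ := ‖(inner ℂ ((star U) φ) ψ : ℂ)‖ with hbb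
  set t : ℝ := ‖(inner ℂ φ (U (U φ)) : ℂ)‖ with htt
  -- first term
  have h1 : κ * (‖ψ‖ ^ 2 - a ^ 2) ≤ (inner ℂ ψ ((U * A * star U) ψ) : ℂ).re := by
    have e1 : (inner ℂ ψ ((U * A * star U) ψ) : ℂ) = inner ℂ ((star U) ψ) (A ((star U) ψ)) := by
      simp only [ContinuousLinearMap.mul_apply]
      rw [← hadj, ← ContinuousLinearMap.adjoint_inner_left, hadj]
    have e2 : (inner ℂ φ ((star U) ψ) : ℂ) = inner ℂ (U φ) ψ := by
      rw [← hadj, ContinuousLinearMap.adjoint_inner_right]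
    have := hgap ((star U) ψ)
    rw [e2, hnormUs] at this
    rw [e1]
    exact this
  -- second term
  have h2 : κ * (‖ψ‖ ^ 2 - b ^ 2) ≤ (inner ℂ ψ ((star U * A * U) ψ) : ℂ).re := by
    have e1 : (inner ℂ ψ ((star U * A * U) ψ) : ℂ) = inner ℂ (U ψ) (A (U ψ)) := by
      simp only [ContinuousLinearMap.mul_apply]
      rw [ContinuousLinearMap.star_eq_adjoint, ContinuousLinearMap.adjoint_inner_right]
    have e2 : (inner ℂ φ (U ψ) : ℂ) = inner ℂ ((star U) φ) ψ := by
      rw [← hadj, ContinuousLinearMap.adjoint_inner_left]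
    have := hgap (U ψ)
    rw [e2, hnormU] at this
    rw [e1]
    exact this
  -- overlap identification
  have hover : ‖(inner ℂ (U φ) ((star U) φ) : ℂ)‖ = t := by
    rw [← hadj, ContinuousLinearMap.adjoint_inner_right, htt, ← inner_conj_symm,
      RCLike.norm_conj]
  -- projection bound
  have hproj : a ^ 2 + b ^ 2 ≤ (1 + t) * ‖ψ‖ ^ 2 := by
    have := two_projection_bound (U φ) ((star U) φ) ψ (by rw [hnormU, hφ]) (by rw [hnormUs, hφ])
    rwa [hover, ← haa, ← hbb] at this
  have hsum : (inner ℂ ψ ((U * A * star U + star U * A * U) ψ) : ℂ).re =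
      (inner ℂ ψ ((U * A * star U) ψ) : ℂ).re + (inner ℂ ψ ((star U * A * U) ψ) : ℂ).re := by
    rw [ContinuousLinearMap.add_apply, inner_add_right, Complex.add_re]
  rw [hsum]
  nlinarith [mul_le_mul_of_nonneg_left hproj hκ]
end

section
/- Let N ≥ 3 be an integer, let C₀ > 0, and let f : ℝ → ℝ be a function of class C^{N-1} satisfying |f^{(n)}(x)| ≤ C₀ (1+|x|)^{1-n} for all x ∈ ℝ and all integers n with 1 ≤ n ≤ N-1. For a₁, …, a_N ∈ ℝ define the divided difference [a₁,…,a_N]_f = ∫_{Δ_{N-1}} f^{(N-1)}( a₁ + Σ_{i=2}^{N} c_i (a_i - a₁) ) dc₂ ⋯ dc_N, where Δ_{N-1} = { (c₂,…,c_N) : c_i ≥ 0, c₂ + ⋯ + c_N ≤ 1 } is the standard simplex. Then there exists a finite constant C_N (depending only on N and C₀) such that for all a₁, …, a_N ∈ ℝ, |[a₁,…,a_N]_f| ≤ C_N / (1 + max_{1≤i≤N} |a_i|). -/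
open MeasureTheory

open scoped ENNReal

lemma simplex_isClosed (k : ℕ) :
    IsClosed {c : Fin k → ℝ | (∀ i, 0 ≤ c i) ∧ ∑ i, c i ≤ 1} := by
  have h : {c : Fin k → ℝ | (∀ i, 0 ≤ c i) ∧ ∑ i, c i ≤ 1}
      = (⋂ i, {c : Fin k → ℝ | 0 ≤ c i}) ∩ {c : Fin k → ℝ | ∑ i, c i ≤ 1} := by
    ext c; simp [Set.mem_iInter]
  rw [h]
  exact (isClosed_iInter fun i => isClosed_le continuous_const (continuous_apply i)).inter
    (isClosed_le (by fun_prop) continuous_const)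

lemma simplex_subset_Icc (k : ℕ) :
    {c : Fin k → ℝ | (∀ i, 0 ≤ c i) ∧ ∑ i, c i ≤ 1} ⊆ Set.Icc (0 : Fin k → ℝ) 1 := by
  rintro c ⟨h0, h1⟩
  refine ⟨fun i => h0 i, fun i => ?_⟩
  calc c i ≤ ∑ j, c j := Finset.single_le_sum (fun j _ => h0 j) (Finset.mem_univ i)
  _ ≤ 1 := h1

lemma simplex_isCompact (k : ℕ) :
    IsCompact {c : Fin k → ℝ | (∀ i, 0 ≤ c i) ∧ ∑ i, c i ≤ 1} :=
  IsCompact.of_isClosed_subset isCompact_Icc (simplex_isClosed k) (simplex_subset_Icc k)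

lemma simplex_volume_le (k : ℕ) :
    volume {c : Fin k → ℝ | (∀ i, 0 ≤ c i) ∧ ∑ i, c i ≤ 1} ≤ 1 := by
  refine le_trans (measure_mono (simplex_subset_Icc k)) ?_
  rw [Real.volume_Icc_pi]
  simp

lemma simplex_bound (k : ℕ) (G : (Fin k → ℝ) → ℝ) (hG : Continuous G) (B : ℝ) (hB : 0 ≤ B)
    (h : ∀ c ∈ {c : Fin k → ℝ | (∀ i, 0 ≤ c i) ∧ ∑ i, c i ≤ 1}, |G c| ≤ B) :
    |∫ c in {c : Fin k → ℝ | (∀ i, 0 ≤ c i) ∧ ∑ i, c i ≤ 1}, G c| ≤ B := by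
  have hvol : volume {c : Fin k → ℝ | (∀ i, 0 ≤ c i) ∧ ∑ i, c i ≤ 1} < ∞ :=
    lt_of_le_of_lt (simplex_volume_le k) (by norm_num)
  have := norm_setIntegral_le_of_norm_le_const (μ := volume) (f := G) hvol h
  rw [Real.norm_eq_abs] at this
  refine this.trans ?_
  calc B * (volume {c : Fin k → ℝ | (∀ i, 0 ≤ c i) ∧ ∑ i, c i ≤ 1}).toReal
      ≤ B * 1 := by
        gcongr
        exact ENNReal.toReal_le_of_le_ofReal (by norm_num) (by simpa using simplex_volume_le k)
  _ = B := mul_one B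

lemma ftc_slice (φ Φ : ℝ → ℝ) (hΦ : ∀ x, HasDerivAt Φ (φ x) x) (hφc : Continuous φ)
    (C₀ : ℝ) (hΦb : ∀ x, |Φ x| ≤ C₀) (A b s : ℝ) (hb : b ≠ 0) (hs : 0 ≤ s) :
    |∫ t in Set.Icc (0:ℝ) s, φ (A + b * t)| ≤ 2 * C₀ / |b| := by
  have key : ∀ x : ℝ, HasDerivAt (fun t => Φ (A + b * t)) (φ (A + b * x) * b) x := by
    intro x
    have h1 : HasDerivAt (fun t : ℝ => A + b * t) b x := by
      simpa using ((hasDerivAt_id x).const_mul b).const_add A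
    exact (hΦ (A + b * x)).comp x h1
  have hint : IntervalIntegrable (fun t => φ (A + b * t) * b) volume 0 s :=
    (Continuous.mul (hφc.comp (by fun_prop)) continuous_const).intervalIntegrable 0 s
  have heq : ∫ t in (0:ℝ)..s, φ (A + b * t) * b = Φ (A + b * s) - Φ (A + b * 0) :=
    intervalIntegral.integral_eq_sub_of_hasDerivAt (fun x _ => key x) hint
  rw [intervalIntegral.integral_mul_const] at heq
  have hIcc : ∫ t in Set.Icc (0:ℝ) s, φ (A + b * t) = ∫ t in (0:ℝ)..s, φ (A + b * t) := by
    rw [intervalIntegral.integral_of_le hs, integral_Icc_eq_integral_Ioc]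
  rw [hIcc]
  have hval : ∫ t in (0:ℝ)..s, φ (A + b * t) = (Φ (A + b * s) - Φ (A + b * 0)) / b := by
    field_simp at heq ⊢
    linarith [heq]
  rw [hval, abs_div]
  have : |Φ (A + b * s) - Φ (A + b * 0)| ≤ 2 * C₀ :=
    (abs_sub _ _).trans (by linarith [hΦb (A + b * s), hΦb (A + b * 0)])
  gcongr

lemma fubini_bound (k : ℕ) (φ Φ : ℝ → ℝ) (hΦ : ∀ x, HasDerivAt Φ (φ x) x) (hφc : Continuous φ)
    (C₀ : ℝ) (hΦb : ∀ x, |Φ x| ≤ C₀) (a₀ : ℝ) (d : Fin (k+1) → ℝ) (i : Fin (k+1))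
    (hb : d i ≠ 0) :
    |∫ c in {c : Fin (k+1) → ℝ | (∀ j, 0 ≤ c j) ∧ ∑ j, c j ≤ 1},
      φ (a₀ + ∑ j, c j * d j)| ≤ 2 * C₀ / |d i| := by
  have hC₀ : 0 ≤ C₀ := le_trans (abs_nonneg _) (hΦb 0)
  set Δ := {c : Fin (k+1) → ℝ | (∀ j, 0 ≤ c j) ∧ ∑ j, c j ≤ 1} with hΔ
  have hΔm : MeasurableSet Δ := (simplex_isClosed (k+1)).measurableSet
  set G : (Fin (k+1) → ℝ) → ℝ := fun c => φ (a₀ + ∑ j, c j * d j) with hG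
  have hGc : Continuous G := hφc.comp (by fun_prop)
  set H : (Fin (k+1) → ℝ) → ℝ := Δ.indicator G with hH
  have hHint : Integrable H := by
    rw [hH, integrable_indicator_iff hΔm]
    exact hGc.continuousOn.integrableOn_compact (simplex_isCompact (k+1))
  have h1 : ∫ c in Δ, G c = ∫ c, H c := (integral_indicator hΔm).symm
  set e : ℝ × (Fin k → ℝ) ≃ᵐ (Fin (k+1) → ℝ) :=
    (MeasurableEquiv.piFinSuccAbove (fun _ => ℝ) i).symm with he
  have hem : MeasurePreserving e :=
    (volume_preserving_piFinSuccAbove (fun _ : Fin (k+1) => ℝ) i).symm _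
  have h2 : ∫ c, H c = ∫ p, H (e p) := (hem.integral_comp e.measurableEmbedding H).symm
  have hJint : Integrable (fun p => H (e p)) :=
    (hem.integrable_comp_emb e.measurableEmbedding).2 hHint
  rw [h1, h2]
  rw [Measure.volume_eq_prod] at hJint ⊢
  rw [integral_prod_symm _ hJint]
  -- inner slices
  set T := {y : Fin k → ℝ | (∀ j, 0 ≤ y j) ∧ ∑ j, y j ≤ 1} with hT
  have hTm : MeasurableSet T := (simplex_isClosed k).measurableSet
  set B : ℝ := 2 * C₀ / |d i| with hBdef
  have hB0 : 0 ≤ B := div_nonneg (by linarith) (abs_nonneg _)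
  set g : (Fin k → ℝ) → ℝ := T.indicator (fun _ => B) with hg
  have hgint : Integrable g := by
    rw [hg, integrable_indicator_iff hTm]
    exact integrableOn_const (lt_of_le_of_lt (simplex_volume_le k) (by norm_num)).ne
  have hbound : ∀ y : Fin k → ℝ, ‖∫ t : ℝ, H (e (t, y))‖ ≤ g y := by
    intro y
    have hins : ∀ t : ℝ, e (t, y) = i.insertNth t y := fun t => by
      simp [he, MeasurableEquiv.piFinSuccAbove_symm_apply, Fin.insertNthEquiv]
    by_cases hy : ∀ j, 0 ≤ y j
    · -- slice is an interval
      set s : ℝ := 1 - ∑ j, y j with hs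
      set A : ℝ := a₀ + ∑ j, y j * d (i.succAbove j) with hA
      have hslice : (fun t : ℝ => H (e (t, y)))
          = (Set.Icc (0:ℝ) s).indicator (fun t => φ (A + d i * t)) := by
        funext t
        rw [hins t, hH]
        have hsum' : ∑ j, (i.insertNth t y) j = t + ∑ j, y j := by
          rw [Fin.sum_univ_succAbove (i.insertNth t y) i]
          simp
        have hmem : (i.insertNth t y ∈ Δ) ↔ (t ∈ Set.Icc (0:ℝ) s) := by
          simp only [hΔ, Set.mem_setOf_eq, Set.mem_Icc, hsum']
          constructor
          · rintro ⟨hpos, hsum⟩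
            have ht : 0 ≤ t := by simpa using hpos i
            exact ⟨ht, by rw [hs]; linarith⟩
          · rintro ⟨ht, hts⟩
            rw [hs] at hts
            refine ⟨fun j' => ?_, by linarith⟩
            refine Fin.succAboveCases i ?_ (fun j => ?_) j'
            · simpa using ht
            · simpa using hy j
        have harg : a₀ + ∑ j, (i.insertNth t y : Fin (k+1) → ℝ) j * d j = A + d i * t := by
          rw [Fin.sum_univ_succAbove (fun j => (i.insertNth t y : Fin (k+1) → ℝ) j * d j) i]
          simp only [Fin.insertNth_apply_same, Fin.insertNth_apply_succAbove]
          rw [hA]; ring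
        by_cases hmem' : t ∈ Set.Icc (0:ℝ) s
        · rw [Set.indicator_of_mem (hmem.mpr hmem'), Set.indicator_of_mem hmem']
          show φ (a₀ + ∑ j, (i.insertNth t y : Fin (k+1) → ℝ) j * d j) = φ (A + d i * t)
          rw [harg]
        · rw [Set.indicator_of_notMem (fun hc => hmem' (hmem.mp hc)),
            Set.indicator_of_notMem hmem']
      rw [hslice]
      by_cases hs0 : 0 ≤ s
      · have hyT : y ∈ T := ⟨hy, by have := hs0; rw [hs] at this; linarith⟩
        have : g y = B := by rw [hg, Set.indicator_of_mem hyT]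
        rw [this, integral_indicator measurableSet_Icc]
        rw [Real.norm_eq_abs]
        exact ftc_slice φ Φ hΦ hφc C₀ hΦb A (d i) s hb hs0
      · have : Set.Icc (0:ℝ) s = ∅ := Set.Icc_eq_empty (by linarith [lt_of_not_ge hs0])
        rw [this]
        simp only [Set.indicator_empty]
        rw [integral_zero, norm_zero]
        exact Set.indicator_nonneg (fun _ _ => hB0) y
    · -- slice vanishes
      push_neg at hy
      obtain ⟨j, hj⟩ := hy
      have hzero : ∀ t : ℝ, H (e (t, y)) = 0 := by
        intro t
        rw [hins t, hH]
        apply Set.indicator_of_notMem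
        rw [hΔ]
        simp only [Set.mem_setOf_eq, not_and_or]
        left
        push_neg
        exact ⟨i.succAbove j, by rw [Fin.insertNth_apply_succAbove]; linarith⟩
      simp only [hzero]
      rw [integral_zero, norm_zero]
      exact Set.indicator_nonneg (fun _ _ => hB0) y
  calc |∫ y, ∫ t, H (e (t, y))| ≤ ∫ y, g y :=
        norm_integral_le_of_norm_le hgint (Filter.Eventually.of_forall hbound)
  _ ≤ 2 * C₀ / |d i| := by
      rw [hg, integral_indicator_const _ hTm, smul_eq_mul]
      calc (volume T).toReal * B ≤ 1 * B := by
            gcongr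
            exact ENNReal.toReal_le_of_le_ofReal (by norm_num) (by simpa using simplex_volume_le k)
      _ = B := one_mul B

lemma fubini_bound' (m : ℕ) (hm : m ≠ 0) (φ Φ : ℝ → ℝ) (hΦ : ∀ x, HasDerivAt Φ (φ x) x)
    (hφc : Continuous φ)
    (C₀ : ℝ) (hΦb : ∀ x, |Φ x| ≤ C₀) (a₀ : ℝ) (d : Fin m → ℝ) (i : Fin m)
    (hb : d i ≠ 0) :
    |∫ c in {c : Fin m → ℝ | (∀ j, 0 ≤ c j) ∧ ∑ j, c j ≤ 1},
      φ (a₀ + ∑ j, c j * d j)| ≤ 2 * C₀ / |d i| := by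
  obtain ⟨k, rfl⟩ := Nat.exists_eq_succ_of_ne_zero hm
  exact fubini_bound k φ Φ hΦ hφc C₀ hΦb a₀ d i hb

/-- First part of Lemma 8.1 of Frank–Hainzl–Seiringer–Solovej: the divided difference
`[a₁,…,a_N]_f`, expressed via the Hermite–Genocchi simplex-integral formula, of a
`C^{N-1}` function whose `n`-th derivative is bounded by `C₀(1+|x|)^{1-n}` for
`1 ≤ n ≤ N-1`, decays at least as fast as the reciprocal of `1` plus the largest
argument. -/
theorem divided_difference_decay (N : ℕ) (hN : 3 ≤ N) (C₀ : ℝ) (hC₀ : 0 < C₀) :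
    ∃ C : ℝ, ∀ f : ℝ → ℝ, ContDiff ℝ (N - 1 : ℕ) f →
      (∀ n : ℕ, 1 ≤ n → n ≤ N - 1 → ∀ x : ℝ,
        |iteratedDeriv n f x| ≤ C₀ * (1 + |x|) ^ ((1 : ℝ) - n)) →
      ∀ a : Fin N → ℝ,
        |∫ c in {c : Fin (N - 1) → ℝ | (∀ i, 0 ≤ c i) ∧ ∑ i, c i ≤ 1},
            iteratedDeriv (N - 1) f
              (a ⟨0, by omega⟩ + ∑ i : Fin (N - 1),
                c i * (a ⟨i.1 + 1, by have := i.isLt; omega⟩ - a ⟨0, by omega⟩))|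
          ≤ C / (1 + ⨆ i : Fin N, |a i|) := by
  haveI : NeZero N := ⟨by omega⟩
  refine ⟨16 * C₀, fun f hf hder a => ?_⟩
  set φ : ℝ → ℝ := iteratedDeriv (N - 1) f with hφdef
  set Φ : ℝ → ℝ := iteratedDeriv (N - 2) f with hΦdef
  have hφc : Continuous φ := hf.continuous_iteratedDeriv (N - 1) le_rfl
  have hΦderiv : ∀ x, HasDerivAt Φ (φ x) x := by
    have hd : Differentiable ℝ Φ :=
      hf.differentiable_iteratedDeriv (N - 2) (by exact_mod_cast show N - 2 < N - 1 by omega)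
    have hφΦ : φ = deriv Φ := by
      rw [hφdef, hΦdef, show N - 1 = (N - 2) + 1 from by omega, iteratedDeriv_succ]
    intro x
    rw [hφΦ]
    exact (hd x).hasDerivAt
  -- bounds
  have hcast1 : (2 : ℝ) ≤ ((N - 1 : ℕ) : ℝ) := by exact_mod_cast show 2 ≤ N - 1 by omega
  have hcast2 : (1 : ℝ) ≤ ((N - 2 : ℕ) : ℝ) := by exact_mod_cast show 1 ≤ N - 2 by omega
  have hΦb : ∀ x, |Φ x| ≤ C₀ := by
    intro x
    refine (hder (N - 2) (by omega) (by omega) x).trans ?_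
    calc C₀ * (1 + |x|) ^ ((1 : ℝ) - (N - 2 : ℕ))
        ≤ C₀ * 1 := by
          gcongr
          exact Real.rpow_le_one_of_one_le_of_nonpos (by linarith [abs_nonneg x]) (by linarith)
    _ = C₀ := mul_one C₀
  have hφb : ∀ x : ℝ, |φ x| ≤ C₀ * (1 + |x|)⁻¹ := by
    intro x
    refine (hder (N - 1) (by omega) le_rfl x).trans ?_
    have h1x : (1 : ℝ) ≤ 1 + |x| := by linarith [abs_nonneg x]
    calc C₀ * (1 + |x|) ^ ((1 : ℝ) - (N - 1 : ℕ))
        ≤ C₀ * (1 + |x|) ^ (-1 : ℝ) :=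
          mul_le_mul_of_nonneg_left
            (Real.rpow_le_rpow_of_exponent_le h1x (by linarith)) hC₀.le
    _ = C₀ * (1 + |x|)⁻¹ := by rw [Real.rpow_neg_one]
  have hφb' : ∀ x : ℝ, |φ x| ≤ C₀ := fun x =>
    (hφb x).trans (by
      have h1x : (1 : ℝ) ≤ 1 + |x| := by linarith [abs_nonneg x]
      calc C₀ * (1 + |x|)⁻¹ ≤ C₀ * 1 := by
            gcongr
            exact inv_le_one_of_one_le₀ h1x
      _ = C₀ := mul_one C₀)
  set M := ⨆ i : Fin N, |a i| with hMdef
  have hbdd : BddAbove (Set.range fun i : Fin N => |a i|) := Set.Finite.bddAbove (Set.finite_range _)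
  have hMge : ∀ j : Fin N, |a j| ≤ M := fun j => le_ciSup hbdd j
  have hM0 : 0 ≤ M := le_trans (abs_nonneg _) (hMge ⟨0, by omega⟩)
  obtain ⟨i₀, hi₀⟩ := Finite.exists_max (fun i : Fin N => |a i|)
  have hMle : M ≤ |a i₀| := ciSup_le hi₀
  set a₀ : ℝ := a ⟨0, by omega⟩ with ha₀
  set d : Fin (N - 1) → ℝ :=
    fun i => a ⟨i.1 + 1, by have := i.isLt; omega⟩ - a ⟨0, by omega⟩ with hd
  have hG : Continuous fun c : Fin (N - 1) → ℝ =>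
      φ (a₀ + ∑ i : Fin (N - 1), c i * d i) := hφc.comp (by fun_prop)
  have h1M : 0 < 1 + M := by linarith
  by_cases hM1 : M ≤ 1
  · -- small M : crude bound
    refine le_trans (simplex_bound (N - 1) _ hG C₀ hC₀.le fun c _ => hφb' _) ?_
    rw [le_div_iff₀ h1M]
    nlinarith
  · push_neg at hM1
    by_cases hA : ∀ i : Fin (N - 1), |d i| ≤ M / 4
    · -- all increments small: argument stays large
      have hpt : ∀ c ∈ {c : Fin (N - 1) → ℝ | (∀ i, 0 ≤ c i) ∧ ∑ i, c i ≤ 1},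
          |φ (a₀ + ∑ i : Fin (N - 1), c i * d i)| ≤ 2 * C₀ / (1 + M) := by
        rintro c ⟨hc0, hc1⟩
        have hsum : |∑ i : Fin (N - 1), c i * d i| ≤ M / 4 := by
          refine le_trans (Finset.abs_sum_le_sum_abs _ _) ?_
          calc ∑ i : Fin (N - 1), |c i * d i|
              ≤ ∑ i : Fin (N - 1), c i * (M / 4) := by
                refine Finset.sum_le_sum fun i _ => ?_
                rw [abs_mul, abs_of_nonneg (hc0 i)]
                exact mul_le_mul_of_nonneg_left (hA i) (hc0 i)
          _ = (∑ i : Fin (N - 1), c i) * (M / 4) := (Finset.sum_mul _ _ _).symm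
          _ ≤ 1 * (M / 4) := by
                exact mul_le_mul_of_nonneg_right hc1 (by linarith)
          _ = M / 4 := one_mul _
        have ha₀big : 3 * M / 4 ≤ |a₀| := by
          by_cases h0 : (i₀ : ℕ) = 0
          · have : a i₀ = a₀ := by rw [ha₀]; congr 1; exact Fin.ext h0
            rw [← this]; linarith
          · set i' : Fin (N - 1) := ⟨(i₀ : ℕ) - 1, by have := i₀.isLt; omega⟩ with hi'
            have hidx : a ⟨i'.1 + 1, by have := i'.isLt; omega⟩ = a i₀ := by
              congr 1; exact Fin.ext (by simp [hi']; omega)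
            have := hA i'
            rw [hd] at this
            simp only at this
            rw [hidx] at this
            have h2 : |a i₀| - |a₀| ≤ |a i₀ - a ⟨0, by omega⟩| := by
              rw [ha₀]; exact abs_sub_abs_le_abs_sub _ _
            rw [← ha₀] at h2
            linarith
        have hxbig : M / 2 ≤ |a₀ + ∑ i : Fin (N - 1), c i * d i| := by
          have := abs_sub_abs_le_abs_sub a₀ (-(∑ i : Fin (N - 1), c i * d i))
          rw [sub_neg_eq_add, abs_neg] at this
          linarith
        refine (hφb _).trans ?_
        rw [← div_eq_mul_inv, div_le_div_iff₀ (by linarith [abs_nonneg (a₀ + ∑ i : Fin (N - 1), c i * d i)]) h1M]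
        nlinarith [hxbig, hC₀.le, hM0]
      refine le_trans (simplex_bound (N - 1) _ hG (2 * C₀ / (1 + M))
        (div_nonneg (by linarith) h1M.le) hpt) ?_
      rw [div_le_div_iff₀ h1M h1M]
      nlinarith
    · -- some increment large : Fubini + FTC
      push_neg at hA
      obtain ⟨i, hi⟩ := hA
      have hb : d i ≠ 0 := by
        intro h
        rw [h, abs_zero] at hi
        linarith
      refine le_trans (fubini_bound' (N - 1) (by omega) φ Φ hΦderiv hφc C₀ hΦb a₀ d i hb) ?_
      rw [div_le_div_iff₀ (abs_pos.mpr hb) h1M]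
      have hdi : M / 4 < |d i| := hi
      nlinarith [abs_nonneg (d i), abs_pos.mpr hb]
end

section
/- There exists a finite constant C > 0 such that for every function a : ℤ³ → [0,∞) with Σ_{p∈ℤ³} (1+|p|²)² a(p)² < ∞, one has Σ_{p₁,p₂,p₃ ∈ ℤ³} |p₁|² · a(p₁) a(p₂) a(p₃) a(-p₁-p₂-p₃) ≤ C · ( Σ_{p∈ℤ³} (1+|p|²)² a(p)² )^{1/2} · ( Σ_{p∈ℤ³} (1+|p|²) a(p)² )^{3/2}. -/
open scoped ENNReal
open MeasureTheory

namespace QFSE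

/-! ### ℝ≥0∞ Cauchy–Schwarz tools -/

lemma rpow_half_sq (x : ℝ≥0∞) : (x ^ ((1:ℝ)/2)) ^ 2 = x := by
  rw [← ENNReal.rpow_natCast (x ^ ((1:ℝ)/2)) 2, ← ENNReal.rpow_mul]
  norm_num

lemma sq_rpow_half (x : ℝ≥0∞) : (x ^ 2) ^ ((1:ℝ)/2) = x := by
  rw [← ENNReal.rpow_natCast x 2, ← ENNReal.rpow_mul]
  norm_num

section CS
variable {ι : Type*} [Countable ι] [MeasurableSpace ι] [MeasurableSingletonClass ι]

lemma enn_cs (f g : ι → ℝ≥0∞) :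
    (∑' i, f i * g i) ≤ (∑' i, (f i)^2) ^ ((1:ℝ)/2) * (∑' i, (g i)^2) ^ ((1:ℝ)/2) := by
  have hconj : Real.HolderConjugate 2 2 := Real.HolderConjugate.two_two
  have h := ENNReal.lintegral_mul_le_Lp_mul_Lq (Measure.count : Measure ι) hconj
    (measurable_of_countable f).aemeasurable (measurable_of_countable g).aemeasurable
  simp only [Pi.mul_apply, lintegral_count] at h
  have h2 : ∀ x : ℝ≥0∞, x ^ (2:ℝ) = x ^ (2:ℕ) := fun x => by
    rw [← ENNReal.rpow_natCast x 2]; norm_num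
  calc ∑' i, f i * g i
      ≤ (∑' i, f i ^ (2:ℝ)) ^ ((1:ℝ)/2) * (∑' i, g i ^ (2:ℝ)) ^ ((1:ℝ)/2) := by
        simpa using h
    _ = _ := by simp_rw [h2]

lemma enn_cs_sq (f g : ι → ℝ≥0∞) :
    (∑' i, f i * g i)^2 ≤ (∑' i, (f i)^2) * (∑' i, (g i)^2) := by
  have h := enn_cs f g
  rw [pow_two]
  refine le_trans (mul_le_mul' h h) ?_
  rw [mul_mul_mul_comm, ← pow_two, ← pow_two, rpow_half_sq, rpow_half_sq]

lemma enn_cs_weight (h d : ι → ℝ≥0∞) :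
    (∑' i, h i * d i)^2 ≤ (∑' i, h i) * (∑' i, h i * (d i)^2) := by
  have key := enn_cs_sq (fun i => (h i)^((1:ℝ)/2)) (fun i => (h i)^((1:ℝ)/2) * d i)
  have e1 : ∀ i, (h i)^((1:ℝ)/2) * ((h i)^((1:ℝ)/2) * d i) = h i * d i := fun i => by
    rw [← mul_assoc, ← pow_two, rpow_half_sq]
  have e2 : ∀ i, ((h i)^((1:ℝ)/2))^2 = h i := fun i => rpow_half_sq _
  have e3 : ∀ i, ((h i)^((1:ℝ)/2) * d i)^2 = h i * (d i)^2 := fun i => by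
    rw [mul_pow, rpow_half_sq]
  simp only [e1, e2, e3] at key
  exact key

end CS

/-! ### The trilinear convolution operator -/

abbrev P := Fin 3 → ℤ

noncomputable def l2n (F : P → ℝ≥0∞) : ℝ≥0∞ := (∑' p, (F p)^2) ^ ((1:ℝ)/2)

noncomputable def G (b c d : P → ℝ≥0∞) (p₁ : P) : ℝ≥0∞ :=
  ∑' q : P × P, b q.1 * c q.2 * d (-p₁ - q.1 - q.2)

lemma G_swap12 (b c d : P → ℝ≥0∞) : G b c d = G c b d := by
  funext p₁
  unfold G
  rw [← Equiv.tsum_eq (Equiv.prodComm P P) (fun q : P × P => c q.1 * b q.2 * d (-p₁ - q.1 - q.2))]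
  refine tsum_congr fun q => ?_
  simp only [Equiv.prodComm_apply, Prod.fst_swap, Prod.snd_swap]
  rw [mul_comm (c q.2) (b q.1), sub_right_comm]

lemma G_swap23 (b c d : P → ℝ≥0∞) : G b c d = G b d c := by
  funext p₁
  unfold G
  rw [ENNReal.tsum_prod (f := fun x y => b x * c y * d (-p₁ - x - y)),
    ENNReal.tsum_prod (f := fun x y => b x * d y * c (-p₁ - x - y))]
  refine tsum_congr fun x => ?_
  rw [← Equiv.tsum_eq (Equiv.subLeft (-p₁ - x)) (fun y : P => b x * d y * c (-p₁ - x - y))]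
  refine tsum_congr fun y => ?_
  simp only [Equiv.subLeft_apply]
  rw [sub_sub_cancel]
  ring

lemma G_l2_sq_bound (b c d : P → ℝ≥0∞) :
    ∑' p₁ : P, (G b c d p₁)^2 ≤
      ((∑' p, b p) * (∑' p, c p))^2 * (∑' p, (d p)^2) := by
  have step1 : ∀ p₁ : P, (G b c d p₁)^2 ≤
      (∑' q : P × P, b q.1 * c q.2) *
      (∑' q : P × P, b q.1 * c q.2 * (d (-p₁ - q.1 - q.2))^2) := fun p₁ =>
    enn_cs_weight (fun q : P × P => b q.1 * c q.2) (fun q : P × P => d (-p₁ - q.1 - q.2))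
  have hbc : (∑' q : P × P, b q.1 * c q.2) = (∑' p, b p) * (∑' p, c p) := by
    rw [ENNReal.tsum_prod (f := fun x y => b x * c y)]
    simp_rw [ENNReal.tsum_mul_left, ENNReal.tsum_mul_right]
  have hd : ∀ q : P × P, (∑' p₁ : P, (d (-p₁ - q.1 - q.2))^2) = ∑' p, (d p)^2 := by
    intro q
    have harg : ∀ p₁ : P, -p₁ - q.1 - q.2 = (-q.1 - q.2) - p₁ := fun p₁ => by abel
    simp only [harg]
    exact Equiv.tsum_eq (Equiv.subLeft (-q.1 - q.2)) (fun z : P => (d z)^2)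
  calc ∑' p₁ : P, (G b c d p₁)^2
      ≤ ∑' p₁ : P, (∑' q : P × P, b q.1 * c q.2) *
          (∑' q : P × P, b q.1 * c q.2 * (d (-p₁ - q.1 - q.2))^2) :=
        ENNReal.tsum_le_tsum step1
    _ = (∑' q : P × P, b q.1 * c q.2) *
          ∑' q : P × P, (b q.1 * c q.2) * ∑' p₁ : P, (d (-p₁ - q.1 - q.2))^2 := by
        rw [ENNReal.tsum_mul_left]
        congr 1
        rw [ENNReal.tsum_comm (f := fun (p₁ : P) (q : P × P) =>
          b q.1 * c q.2 * (d (-p₁ - q.1 - q.2))^2)]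
        exact tsum_congr fun q => ENNReal.tsum_mul_left
    _ = ((∑' p, b p) * (∑' p, c p))^2 * (∑' p, (d p)^2) := by
        simp only [hd]
        rw [ENNReal.tsum_mul_right, hbc]
        ring

lemma G_norm3 (b c d : P → ℝ≥0∞) :
    l2n (G b c d) ≤ (∑' p, b p) * (∑' p, c p) * l2n d := by
  unfold l2n
  refine le_trans (ENNReal.rpow_le_rpow (G_l2_sq_bound b c d) (by norm_num)) ?_
  rw [ENNReal.mul_rpow_of_nonneg _ _ (by norm_num : (0:ℝ) ≤ 1/2), sq_rpow_half]

lemma G_norm1 (b c d : P → ℝ≥0∞) :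
    l2n (G b c d) ≤ l2n b * (∑' p, c p) * (∑' p, d p) := by
  have h : G b c d = G c d b := by rw [G_swap12, G_swap23]
  rw [h]
  refine le_trans (G_norm3 c d b) (le_of_eq ?_)
  ring

lemma G_norm2 (b c d : P → ℝ≥0∞) :
    l2n (G b c d) ≤ (∑' p, b p) * l2n c * (∑' p, d p) := by
  rw [G_swap23]
  refine le_trans (G_norm3 b d c) (le_of_eq ?_)
  ring

/-! ### Dyadic shells -/

def nw (p : P) : ℕ := 1 + ∑ i, (p i).natAbs ^ 2

lemma nw_pos (p : P) : 0 < nw p := Nat.lt_of_lt_of_le Nat.zero_lt_one (Nat.le_add_right 1 _)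

def klev (p : P) : ℕ := Nat.log 4 (nw p)

lemma klev_lower (p : P) : 4 ^ klev p ≤ nw p := Nat.pow_log_le_self 4 (nw_pos p).ne'

lemma klev_upper (p : P) : nw p < 4 ^ (klev p + 1) := Nat.lt_pow_succ_log_self (by norm_num) _

lemma nw_cast (p : P) : (nw p : ℝ) = 1 + ∑ i, ((p i : ℝ))^2 := by
  unfold nw
  push_cast
  congr 1
  refine Finset.sum_congr rfl fun i _ => ?_
  rw [Nat.cast_natAbs, Int.cast_abs, sq_abs]

noncomputable def box (j : ℕ) : Finset P := Fintype.piFinset fun _ => Finset.Icc (-(2^(j+1) : ℤ)) (2^(j+1))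

lemma mem_box_of_klev {p : P} {j : ℕ} (h : klev p = j) : p ∈ box j := by
  rw [box, Fintype.mem_piFinset]
  intro i
  rw [Finset.mem_Icc]
  have h1 : (p i).natAbs ^ 2 < 4 ^ (j+1) := by
    have hu := klev_upper p
    rw [h] at hu
    refine lt_of_le_of_lt ?_ hu
    unfold nw
    calc (p i).natAbs ^ 2 ≤ ∑ i', (p i').natAbs ^ 2 :=
          Finset.single_le_sum (f := fun i' => (p i').natAbs ^ 2)
            (fun _ _ => Nat.zero_le _) (Finset.mem_univ i)
      _ ≤ 1 + ∑ i', (p i').natAbs ^ 2 := Nat.le_add_left _ _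
  have h2 : (p i).natAbs < 2 ^ (j+1) := by
    by_contra hc
    push_neg at hc
    have hsq : (2^(j+1))^2 ≤ ((p i).natAbs)^2 := Nat.pow_le_pow_left hc 2
    have h4 : (4:ℕ)^(j+1) = (2^(j+1))^2 := by
      rw [show (4:ℕ) = 2^2 by norm_num, ← pow_mul, ← pow_mul, mul_comm]
    omega
  have hcast : ((p i).natAbs : ℤ) < 2^(j+1) := by exact_mod_cast h2
  constructor <;> omega

lemma card_box (j : ℕ) : (box j).card ≤ 2 ^ (3*j+9) := by
  rw [box, Fintype.card_piFinset]
  have hc : ∀ i : Fin 3, ((Finset.Icc (-(2^(j+1) : ℤ)) (2^(j+1))).card) = 2^(j+2) + 1 := by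
    intro i
    rw [Int.card_Icc]
    have : ((2:ℤ)^(j+1) + 1 - -(2^(j+1))) = ((2^(j+2) + 1 : ℕ) : ℤ) := by
      push_cast
      ring
    rw [this, Int.toNat_natCast]
  rw [Finset.prod_congr rfl (fun i _ => hc i), Finset.prod_const]
  have hcard : (Finset.univ : Finset (Fin 3)).card = (3:ℕ) := by simp
  rw [hcard]
  calc (2^(j+2) + 1)^3 ≤ (2^(j+3))^3 := by
        have : 2^(j+2) + 1 ≤ 2^(j+3) := by
          have : (2:ℕ)^(j+3) = 2 * 2^(j+2) := by ring
          have h1 : (1:ℕ) ≤ 2^(j+2) := Nat.one_le_two_pow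
          omega
        exact Nat.pow_le_pow_left this 3
    _ = 2^(3*j+9) := by rw [← pow_mul]; ring_nf

lemma indicator_sum_le (j : ℕ) :
    (∑' p : P, (if klev p = j then (1:ℝ≥0∞) else 0)) ≤ (2:ℝ≥0∞) ^ (3*j+9) := by
  rw [tsum_eq_sum (s := box j) (fun p hp => by
    rw [if_neg]
    exact fun h => hp (mem_box_of_klev h))]
  calc ∑ p ∈ box j, (if klev p = j then (1:ℝ≥0∞) else 0)
      ≤ ∑ _p ∈ box j, (1:ℝ≥0∞) := Finset.sum_le_sum (fun p _ => by split <;> simp)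
    _ = ((box j).card : ℝ≥0∞) := by rw [Finset.sum_const, nsmul_eq_mul, mul_one]
    _ ≤ ((2 ^ (3*j+9) : ℕ) : ℝ≥0∞) := by exact_mod_cast card_box j
    _ = (2:ℝ≥0∞) ^ (3*j+9) := by push_cast; ring

/-! ### Shell decomposition of coefficients -/

noncomputable def al (a : P → ℝ) (p : P) : ℝ≥0∞ := ENNReal.ofReal (a p)

noncomputable def als (a : P → ℝ) (j : ℕ) (p : P) : ℝ≥0∞ := if klev p = j then al a p else 0

noncomputable def Ej (a : P → ℝ) (j : ℕ) : ℝ≥0∞ :=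
  ∑' p : P, (if klev p = j then ENNReal.ofReal ((1 + ∑ i, ((p i : ℝ))^2) * a p ^ 2) else 0)

noncomputable def eps (a : P → ℝ) (j : ℕ) : ℝ≥0∞ := (Ej a j) ^ ((1:ℝ)/2)

lemma sum_als (a : P → ℝ) (p : P) : ∑' j : ℕ, als a j p = al a p := by
  unfold als
  rw [tsum_eq_single (klev p) (fun j hj => if_neg (fun h => hj h.symm))]
  exact if_pos rfl

lemma sum_Ej (a : P → ℝ) :
    ∑' j : ℕ, Ej a j = ∑' p : P, ENNReal.ofReal ((1 + ∑ i, ((p i : ℝ))^2) * a p ^ 2) := by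
  unfold Ej
  rw [ENNReal.tsum_comm]
  refine tsum_congr fun p => ?_
  rw [tsum_eq_single (klev p) (fun j hj => if_neg (fun h => hj h.symm))]
  exact if_pos rfl

lemma four_pow_le (p : P) : ((4:ℝ) ^ klev p) ≤ 1 + ∑ i, ((p i : ℝ))^2 := by
  rw [← nw_cast]
  exact_mod_cast klev_lower p

lemma two_rpow_neg_sq (j : ℕ) : ((2:ℝ≥0∞) ^ (-(j:ℝ)))^2 = (ENNReal.ofReal ((4:ℝ)^j))⁻¹ := by
  have h4 : ENNReal.ofReal ((4:ℝ)^j) = (4:ℝ≥0∞)^j := by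
    rw [ENNReal.ofReal_pow (by norm_num)]
    norm_num
  rw [h4, ← ENNReal.rpow_natCast ((2:ℝ≥0∞) ^ (-(j:ℝ))) 2, ← ENNReal.rpow_mul]
  have h : (-(j:ℝ)) * ((2:ℕ):ℝ) = -(((2*j : ℕ)):ℝ) := by push_cast; ring
  rw [h, ENNReal.rpow_neg, ENNReal.rpow_natCast, pow_mul]
  norm_num

lemma als_sq_le (a : P → ℝ) (ha : ∀ p, 0 ≤ a p) (j : ℕ) (p : P) :
    (als a j p)^2 ≤ ((2:ℝ≥0∞) ^ (-(j:ℝ)))^2 *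
      (if klev p = j then ENNReal.ofReal ((1 + ∑ i, ((p i : ℝ))^2) * a p ^ 2) else 0) := by
  unfold als
  by_cases h : klev p = j
  · simp only [if_pos h]
    have e : (al a p)^2 = ENNReal.ofReal (a p ^ 2) := by
      unfold al; rw [← ENNReal.ofReal_pow (ha p)]
    rw [e, two_rpow_neg_sq]
    set X := ENNReal.ofReal ((4:ℝ)^j) with hX
    have key : X * ENNReal.ofReal (a p ^ 2)
        ≤ ENNReal.ofReal ((1 + ∑ i, ((p i : ℝ))^2) * a p ^ 2) := by
      rw [hX, ← ENNReal.ofReal_mul (by positivity)]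
      refine ENNReal.ofReal_le_ofReal ?_
      have hw := four_pow_le p
      rw [h] at hw
      exact mul_le_mul_of_nonneg_right hw (sq_nonneg _)
    have hX0 : X ≠ 0 := by
      rw [hX]
      simp only [ne_eq, ENNReal.ofReal_eq_zero, not_le]
      positivity
    have hXt : X ≠ ⊤ := ENNReal.ofReal_ne_top
    calc ENNReal.ofReal (a p ^ 2) = X⁻¹ * (X * ENNReal.ofReal (a p ^ 2)) := by
          rw [← mul_assoc, ENNReal.inv_mul_cancel hX0 hXt, one_mul]
      _ ≤ X⁻¹ * ENNReal.ofReal ((1 + ∑ i, ((p i : ℝ))^2) * a p ^ 2) :=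
          mul_le_mul' le_rfl key
  · simp [if_neg h]

lemma tj_le (a : P → ℝ) (ha : ∀ p, 0 ≤ a p) (j : ℕ) :
    (∑' p : P, (als a j p)^2) ^ ((1:ℝ)/2) ≤ (2:ℝ≥0∞)^(-(j:ℝ)) * eps a j := by
  have h1 : ∑' p : P, (als a j p)^2 ≤ ((2:ℝ≥0∞)^(-(j:ℝ)))^2 * Ej a j := by
    rw [Ej, ← ENNReal.tsum_mul_left]
    exact ENNReal.tsum_le_tsum (als_sq_le a ha j)
  refine le_trans (ENNReal.rpow_le_rpow h1 (by norm_num)) ?_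
  rw [ENNReal.mul_rpow_of_nonneg _ _ (by norm_num : (0:ℝ) ≤ 1/2), sq_rpow_half]
  exact le_rfl

lemma Lj_le (a : P → ℝ) (ha : ∀ p, 0 ≤ a p) (j : ℕ) :
    (∑' p : P, als a j p) ≤ (2:ℝ≥0∞) ^ (((9:ℝ) + j)/2) * eps a j := by
  have h1 : ∀ p : P, als a j p = (if klev p = j then (1:ℝ≥0∞) else 0) * als a j p := by
    intro p; unfold als; split <;> simp
  have h2 : ∀ p : P, ((if klev p = j then (1:ℝ≥0∞) else 0))^2
      = (if klev p = j then (1:ℝ≥0∞) else 0) := by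
    intro p; split <;> simp
  calc ∑' p, als a j p = ∑' p, (if klev p = j then (1:ℝ≥0∞) else 0) * als a j p :=
        tsum_congr h1
    _ ≤ (∑' p, ((if klev p = j then (1:ℝ≥0∞) else 0))^2)^((1:ℝ)/2) *
        (∑' p, (als a j p)^2)^((1:ℝ)/2) := enn_cs _ _
    _ ≤ ((2:ℝ≥0∞) ^ (3*j+9 : ℕ))^((1:ℝ)/2) * ((2:ℝ≥0∞)^(-(j:ℝ)) * eps a j) := by
        refine mul_le_mul' (ENNReal.rpow_le_rpow ?_ (by norm_num)) (tj_le a ha j)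
        simp only [h2]
        exact indicator_sum_le j
    _ = (2:ℝ≥0∞) ^ (((9:ℝ) + j)/2) * eps a j := by
        rw [← ENNReal.rpow_natCast (2:ℝ≥0∞) (3*j+9), ← ENNReal.rpow_mul, ← mul_assoc,
          ← ENNReal.rpow_add _ _ two_ne_zero ENNReal.ofNat_ne_top]
        congr 2
        push_cast
        ring

/-! ### The Schur kernel -/

noncomputable def rq : ℝ≥0∞ := (2:ℝ≥0∞) ^ (-(1:ℝ)/4)

noncomputable def kap (i k : ℕ) : ℝ≥0∞ := (2:ℝ≥0∞) ^ (-(|(i:ℝ) - (k:ℝ)|)/4)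

lemma rq_lt_one : rq < 1 := by
  have h := ENNReal.rpow_lt_rpow_of_exponent_lt (x := 2)
    (by norm_num : (1:ℝ≥0∞) < 2) ENNReal.ofNat_ne_top
    (show -(1:ℝ)/4 < 0 by norm_num)
  simpa [rq] using h

lemma rq_le_one : rq ≤ 1 := rq_lt_one.le

lemma kap_natAbs (i k : ℕ) : kap i k = rq ^ (((i:ℤ) - (k:ℤ)).natAbs) := by
  unfold kap rq
  rw [← ENNReal.rpow_natCast ((2:ℝ≥0∞) ^ (-(1:ℝ)/4)) (((i:ℤ) - (k:ℤ)).natAbs),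
    ← ENNReal.rpow_mul]
  congr 1
  have h1 : (((((i:ℤ) - k).natAbs : ℕ)) : ℝ) = |(i:ℝ) - (k:ℝ)| := by
    rw [Nat.cast_natAbs]
    push_cast
    ring_nf
  rw [h1]
  ring

lemma kap_symm (i k : ℕ) : kap i k = kap k i := by unfold kap; rw [abs_sub_comm]

noncomputable def Cth : ℝ≥0∞ := 2 * (1 - rq)⁻¹

lemma Cth_ne_top : Cth ≠ ⊤ := by
  have h1 : (1 - rq) ≠ 0 := (tsub_pos_iff_lt.mpr rq_lt_one).ne'
  exact ENNReal.mul_ne_top ENNReal.ofNat_ne_top (ENNReal.inv_ne_top.mpr h1)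

lemma kap_sum_le (k : ℕ) : ∑' i : ℕ, kap i k ≤ Cth := by
  have hgeo : ∑' n : ℕ, rq ^ n = (1 - rq)⁻¹ := ENNReal.tsum_geometric rq
  have hinj : Function.Injective (fun i : ℕ => (i:ℤ) - k) := by
    intro x y h
    simp only at h
    omega
  have h1 : ∑' i : ℕ, kap i k ≤ ∑' m : ℤ, rq ^ m.natAbs := by
    calc ∑' i : ℕ, kap i k = ∑' i : ℕ, rq ^ (((i:ℤ) - (k:ℤ)).natAbs) :=
          tsum_congr fun i => kap_natAbs i k
      _ ≤ ∑' m : ℤ, rq ^ m.natAbs :=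
          ENNReal.tsum_comp_le_tsum_of_injective hinj (fun m => rq ^ m.natAbs)
  have h2 : ∑' m : ℤ, rq ^ m.natAbs
      = (∑' n : ℕ, rq ^ ((n:ℤ)).natAbs) + ∑' n : ℕ, rq ^ ((-((n:ℤ)+1)).natAbs) :=
    tsum_of_nat_of_neg_add_one ENNReal.summable ENNReal.summable
  have e1 : ∑' n : ℕ, rq ^ ((n:ℤ)).natAbs = (1 - rq)⁻¹ := by
    rw [← hgeo]
    refine tsum_congr fun n => ?_
    simp
  have e2 : ∑' n : ℕ, rq ^ ((-((n:ℤ)+1)).natAbs) ≤ (1 - rq)⁻¹ := by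
    rw [← hgeo]
    refine ENNReal.tsum_le_tsum fun n => ?_
    have he : ((-((n:ℤ)+1)).natAbs) = n + 1 := by omega
    rw [he, pow_succ]
    exact mul_le_of_le_one_right' rq_le_one
  calc ∑' i : ℕ, kap i k ≤ ∑' m : ℤ, rq ^ m.natAbs := h1
    _ = _ + _ := h2
    _ ≤ (1 - rq)⁻¹ + (1 - rq)⁻¹ := add_le_add (le_of_eq e1) e2
    _ = Cth := by rw [Cth, two_mul]

/-! ### Per-piece bounds -/

noncomputable def TT (a : P → ℝ) (K : ℕ × ℕ × ℕ) : P → ℝ≥0∞ :=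
  G (als a K.1) (als a K.2.1) (als a K.2.2)

lemma combine3 {x y z : ℝ≥0∞} {α₁ α₂ α₃ β : ℝ} (h : α₁ + α₂ + α₃ ≤ β) :
    ((2:ℝ≥0∞)^α₁ * x) * ((2:ℝ≥0∞)^α₂ * y) * ((2:ℝ≥0∞)^α₃ * z) ≤ (2:ℝ≥0∞)^β * (x*y*z) := by
  have e : ((2:ℝ≥0∞)^α₁ * x) * ((2:ℝ≥0∞)^α₂ * y) * ((2:ℝ≥0∞)^α₃ * z)
      = (2:ℝ≥0∞)^(α₁+α₂+α₃) * (x*y*z) := by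
    rw [ENNReal.rpow_add _ _ two_ne_zero ENNReal.ofNat_ne_top,
      ENNReal.rpow_add _ _ two_ne_zero ENNReal.ofNat_ne_top]
    ring
  rw [e]
  exact mul_le_mul' (ENNReal.rpow_le_rpow_of_exponent_le one_le_two h) le_rfl

lemma rhs_shape (k₁ k₂ k₃ : ℕ) (w : ℝ≥0∞) :
    (2:ℝ≥0∞)^((9:ℝ) + (-(|(k₁:ℝ) - (k₃:ℝ)|)/4 + -(|(k₂:ℝ) - (k₃:ℝ)|)/4)) * w
    = (2:ℝ≥0∞)^(9:ℝ) * (kap k₁ k₃ * kap k₂ k₃) * w := by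
  unfold kap
  rw [ENNReal.rpow_add _ _ two_ne_zero ENNReal.ofNat_ne_top,
    ENNReal.rpow_add _ _ two_ne_zero ENNReal.ofNat_ne_top]

lemma PP (a : P → ℝ) (ha : ∀ p, 0 ≤ a p) (K : ℕ × ℕ × ℕ) :
    l2n (TT a K) ≤ (2:ℝ≥0∞)^(9:ℝ) * (kap K.1 K.2.2 * kap K.2.1 K.2.2) *
      (eps a K.1 * eps a K.2.1 * eps a K.2.2) := by
  obtain ⟨k₁, k₂, k₃⟩ := K
  have hb1 : l2n (als a k₁) ≤ (2:ℝ≥0∞)^(-(k₁:ℝ)) * eps a k₁ := tj_le a ha k₁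
  have hb2 : l2n (als a k₂) ≤ (2:ℝ≥0∞)^(-(k₂:ℝ)) * eps a k₂ := tj_le a ha k₂
  have hb3 : l2n (als a k₃) ≤ (2:ℝ≥0∞)^(-(k₃:ℝ)) * eps a k₃ := tj_le a ha k₃
  have hL1 := Lj_le a ha k₁
  have hL2 := Lj_le a ha k₂
  have hL3 := Lj_le a ha k₃
  show l2n (G (als a k₁) (als a k₂) (als a k₃)) ≤ _
  rw [← rhs_shape k₁ k₂ k₃]
  rcases le_total k₁ k₃ with h13 | h31
  · rcases le_total k₂ k₃ with h23 | h32
    · -- k₃ is max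
      refine le_trans (G_norm3 _ _ _) (le_trans
        (mul_le_mul' (mul_le_mul' hL1 hL2) hb3) (combine3 ?_))
      have c1 : (k₁:ℝ) ≤ (k₃:ℝ) := by exact_mod_cast h13
      have c2 : (k₂:ℝ) ≤ (k₃:ℝ) := by exact_mod_cast h23
      rcases abs_cases ((k₁:ℝ) - (k₃:ℝ)) with ⟨e1, _⟩ | ⟨e1, _⟩ <;>
        rcases abs_cases ((k₂:ℝ) - (k₃:ℝ)) with ⟨e2, _⟩ | ⟨e2, _⟩ <;>
          rw [e1, e2] <;> linarith
    · -- k₂ is max (k₁ ≤ k₃ ≤ k₂)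
      have h12 : k₁ ≤ k₂ := le_trans h13 h32
      refine le_trans (G_norm2 _ _ _) (le_trans
        (mul_le_mul' (mul_le_mul' hL1 hb2) hL3) (combine3 ?_))
      have c1 : (k₁:ℝ) ≤ (k₂:ℝ) := by exact_mod_cast h12
      have c2 : (k₃:ℝ) ≤ (k₂:ℝ) := by exact_mod_cast h32
      rcases abs_cases ((k₁:ℝ) - (k₃:ℝ)) with ⟨e1, _⟩ | ⟨e1, _⟩ <;>
        rcases abs_cases ((k₂:ℝ) - (k₃:ℝ)) with ⟨e2, _⟩ | ⟨e2, _⟩ <;>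
          rw [e1, e2] <;> linarith
  · rcases le_total k₂ k₁ with h21 | h12
    · -- k₁ is max
      refine le_trans (G_norm1 _ _ _) (le_trans
        (mul_le_mul' (mul_le_mul' hb1 hL2) hL3) (combine3 ?_))
      have c1 : (k₂:ℝ) ≤ (k₁:ℝ) := by exact_mod_cast h21
      have c2 : (k₃:ℝ) ≤ (k₁:ℝ) := by exact_mod_cast h31
      rcases abs_cases ((k₁:ℝ) - (k₃:ℝ)) with ⟨e1, _⟩ | ⟨e1, _⟩ <;>
        rcases abs_cases ((k₂:ℝ) - (k₃:ℝ)) with ⟨e2, _⟩ | ⟨e2, _⟩ <;>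
          rw [e1, e2] <;> linarith
    · -- k₂ is max (k₃ ≤ k₁ ≤ k₂)
      have h32' : k₃ ≤ k₂ := le_trans h31 h12
      refine le_trans (G_norm2 _ _ _) (le_trans
        (mul_le_mul' (mul_le_mul' hL1 hb2) hL3) (combine3 ?_))
      have c1 : (k₁:ℝ) ≤ (k₂:ℝ) := by exact_mod_cast h12
      have c2 : (k₃:ℝ) ≤ (k₂:ℝ) := by exact_mod_cast h32'
      rcases abs_cases ((k₁:ℝ) - (k₃:ℝ)) with ⟨e1, _⟩ | ⟨e1, _⟩ <;>
        rcases abs_cases ((k₂:ℝ) - (k₃:ℝ)) with ⟨e2, _⟩ | ⟨e2, _⟩ <;>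
          rw [e1, e2] <;> linarith

/-! ### Decomposition and Minkowski -/

lemma tsum3 (u v w : ℕ → ℝ≥0∞) :
    ∑' K : ℕ × ℕ × ℕ, u K.1 * v K.2.1 * w K.2.2
      = (∑' i, u i) * (∑' i, v i) * (∑' i, w i) := by
  rw [ENNReal.tsum_prod (f := fun k₁ (q : ℕ × ℕ) => u k₁ * v q.1 * w q.2)]
  have inner : ∀ k₁, (∑' q : ℕ × ℕ, u k₁ * v q.1 * w q.2)
      = u k₁ * ((∑' i, v i) * (∑' i, w i)) := by
    intro k₁
    rw [ENNReal.tsum_prod (f := fun i l => u k₁ * v i * w l)]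
    calc ∑' i, ∑' l, u k₁ * v i * w l
        = ∑' i, (u k₁ * v i) * ∑' l, w l := tsum_congr fun i => ENNReal.tsum_mul_left
      _ = (∑' i, u k₁ * v i) * ∑' l, w l := ENNReal.tsum_mul_right
      _ = (u k₁ * ∑' i, v i) * ∑' l, w l := by rw [ENNReal.tsum_mul_left]
      _ = u k₁ * ((∑' i, v i) * (∑' i, w i)) := by ring
  rw [tsum_congr inner, ENNReal.tsum_mul_right, ← mul_assoc]

lemma T_decomp (a : P → ℝ) (p₁ : P) :
    G (al a) (al a) (al a) p₁ = ∑' K : ℕ × ℕ × ℕ, TT a K p₁ := by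
  unfold TT G
  rw [ENNReal.tsum_comm (f := fun (K : ℕ × ℕ × ℕ) (q : P × P) =>
    als a K.1 q.1 * als a K.2.1 q.2 * als a K.2.2 (-p₁ - q.1 - q.2))]
  refine tsum_congr fun q => ?_
  rw [tsum3 (fun j => als a j q.1) (fun j => als a j q.2)
    (fun j => als a j (-p₁ - q.1 - q.2)), sum_als, sum_als, sum_als]

lemma mink (a : P → ℝ) :
    ∑' p₁ : P, (G (al a) (al a) (al a) p₁)^2 ≤ (∑' K : ℕ × ℕ × ℕ, l2n (TT a K))^2 := by
  have h1 : ∀ p₁ : P, (G (al a) (al a) (al a) p₁)^2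
      = ∑' K : ℕ × ℕ × ℕ, ∑' K' : ℕ × ℕ × ℕ, TT a K p₁ * TT a K' p₁ := by
    intro p₁
    rw [T_decomp a p₁, pow_two, ← ENNReal.tsum_mul_right]
    exact tsum_congr fun K => ENNReal.tsum_mul_left.symm
  calc ∑' p₁ : P, (G (al a) (al a) (al a) p₁)^2
      = ∑' K : ℕ × ℕ × ℕ, ∑' K' : ℕ × ℕ × ℕ, ∑' p₁ : P, TT a K p₁ * TT a K' p₁ := by
        rw [tsum_congr h1]
        rw [ENNReal.tsum_comm (f := fun (p₁ : P) (K : ℕ × ℕ × ℕ) =>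
          ∑' K' : ℕ × ℕ × ℕ, TT a K p₁ * TT a K' p₁)]
        exact tsum_congr fun K => ENNReal.tsum_comm (f := fun (p₁ : P) (K' : ℕ × ℕ × ℕ) =>
          TT a K p₁ * TT a K' p₁)
    _ ≤ ∑' K : ℕ × ℕ × ℕ, ∑' K' : ℕ × ℕ × ℕ, l2n (TT a K) * l2n (TT a K') :=
        ENNReal.tsum_le_tsum fun K => ENNReal.tsum_le_tsum fun K' => enn_cs _ _
    _ = (∑' K : ℕ × ℕ × ℕ, l2n (TT a K))^2 := by
        rw [pow_two, ← ENNReal.tsum_mul_right]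
        exact tsum_congr fun K => ENNReal.tsum_mul_left

/-! ### The Schur sum -/

noncomputable def gg (a : P → ℝ) (k : ℕ) : ℝ≥0∞ := ∑' j : ℕ, kap j k * eps a j

lemma gg_sq_sum (a : P → ℝ) : ∑' k : ℕ, (gg a k)^2 ≤ Cth^2 * ∑' j : ℕ, Ej a j := by
  have h1 : ∀ k, (gg a k)^2 ≤ Cth * ∑' j, kap j k * Ej a j := by
    intro k
    refine le_trans (enn_cs_weight (fun j => kap j k) (fun j => eps a j)) ?_
    refine mul_le_mul' (kap_sum_le k) (le_of_eq (tsum_congr fun j => ?_))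
    unfold eps
    rw [rpow_half_sq]
  calc ∑' k, (gg a k)^2 ≤ ∑' k, Cth * ∑' j, kap j k * Ej a j := ENNReal.tsum_le_tsum h1
    _ = Cth * ∑' j, (Ej a j * ∑' k, kap j k) := by
        rw [ENNReal.tsum_mul_left]
        congr 1
        rw [ENNReal.tsum_comm (f := fun k j => kap j k * Ej a j)]
        exact tsum_congr fun j => by rw [ENNReal.tsum_mul_right, mul_comm]
    _ ≤ Cth * ∑' j, (Ej a j * Cth) := by
        refine mul_le_mul' le_rfl (ENNReal.tsum_le_tsum fun j => mul_le_mul' le_rfl ?_)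
        calc ∑' k, kap j k = ∑' k, kap k j := tsum_congr fun k => kap_symm j k
          _ ≤ Cth := kap_sum_le j
    _ = Cth^2 * ∑' j, Ej a j := by rw [ENNReal.tsum_mul_right]; ring

lemma schur_sum (a : P → ℝ) :
    ∑' K : ℕ × ℕ × ℕ, (kap K.1 K.2.2 * kap K.2.1 K.2.2) *
        (eps a K.1 * eps a K.2.1 * eps a K.2.2)
      ≤ (∑' j : ℕ, Ej a j) ^ ((1:ℝ)/2) * (Cth^2 * ∑' j : ℕ, Ej a j) := by
  have hfac : ∑' K : ℕ × ℕ × ℕ, (kap K.1 K.2.2 * kap K.2.1 K.2.2) *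
      (eps a K.1 * eps a K.2.1 * eps a K.2.2)
      = ∑' k₃ : ℕ, eps a k₃ * (gg a k₃)^2 := by
    rw [ENNReal.tsum_prod (f := fun k₁ (q : ℕ × ℕ) =>
      (kap k₁ q.2 * kap q.1 q.2) * (eps a k₁ * eps a q.1 * eps a q.2))]
    have e1 : ∀ k₁, (∑' q : ℕ × ℕ, (kap k₁ q.2 * kap q.1 q.2) *
        (eps a k₁ * eps a q.1 * eps a q.2))
        = ∑' k₃ : ℕ, (kap k₁ k₃ * eps a k₁) * (eps a k₃ * gg a k₃) := by
      intro k₁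
      rw [ENNReal.tsum_prod (f := fun k₂ k₃ =>
        (kap k₁ k₃ * kap k₂ k₃) * (eps a k₁ * eps a k₂ * eps a k₃))]
      rw [ENNReal.tsum_comm (f := fun k₂ k₃ =>
        (kap k₁ k₃ * kap k₂ k₃) * (eps a k₁ * eps a k₂ * eps a k₃))]
      refine tsum_congr fun k₃ => ?_
      calc ∑' k₂, (kap k₁ k₃ * kap k₂ k₃) * (eps a k₁ * eps a k₂ * eps a k₃)
          = ∑' k₂, (kap k₁ k₃ * eps a k₁ * eps a k₃) * (kap k₂ k₃ * eps a k₂) :=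
            tsum_congr fun k₂ => by ring
        _ = (kap k₁ k₃ * eps a k₁ * eps a k₃) * gg a k₃ := ENNReal.tsum_mul_left
        _ = (kap k₁ k₃ * eps a k₁) * (eps a k₃ * gg a k₃) := by ring
    rw [tsum_congr e1]
    rw [ENNReal.tsum_comm (f := fun k₁ k₃ =>
      (kap k₁ k₃ * eps a k₁) * (eps a k₃ * gg a k₃))]
    refine tsum_congr fun k₃ => ?_
    rw [ENNReal.tsum_mul_right]
    rw [show (∑' k₁ : ℕ, kap k₁ k₃ * eps a k₁) = gg a k₃ from rfl]
    ring
  rw [hfac]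
  refine le_trans (enn_cs (fun k => eps a k) (fun k => (gg a k)^2)) ?_
  refine mul_le_mul' (le_of_eq ?_) ?_
  · congr 1
    refine tsum_congr fun k => ?_
    unfold eps
    rw [rpow_half_sq]
  · have h4 : ∑' k, ((gg a k)^2)^2 ≤ (∑' k, (gg a k)^2)^2 := by
      calc ∑' k, ((gg a k)^2)^2
          ≤ ∑' k, (gg a k)^2 * (∑' k', (gg a k')^2) :=
            ENNReal.tsum_le_tsum fun k => by
              rw [pow_two ((gg a k)^2)]
              exact mul_le_mul' le_rfl (ENNReal.le_tsum k)
        _ = (∑' k, (gg a k)^2) * (∑' k', (gg a k')^2) := ENNReal.tsum_mul_right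
        _ = (∑' k, (gg a k)^2)^2 := (pow_two _).symm
    refine le_trans (ENNReal.rpow_le_rpow h4 (by norm_num)) ?_
    rw [sq_rpow_half]
    exact gg_sq_sum a

/-! ### Top-level pieces -/

noncomputable def nu (p : P) : ℝ≥0∞ := ENNReal.ofReal (∑ i, ((p i : ℝ))^2)

lemma nual_sq_le (a : P → ℝ) (ha : ∀ p, 0 ≤ a p) (p : P) :
    (nu p * al a p)^2 ≤ ENNReal.ofReal ((1 + ∑ i, ((p i : ℝ))^2)^2 * a p ^ 2) := by
  have hn : (0:ℝ) ≤ ∑ i, ((p i : ℝ))^2 := by positivity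
  unfold nu al
  rw [mul_pow, ← ENNReal.ofReal_pow hn, ← ENNReal.ofReal_pow (ha p),
    ← ENNReal.ofReal_mul (by positivity)]
  refine ENNReal.ofReal_le_ofReal ?_
  have hsq : (∑ i, ((p i : ℝ))^2)^2 ≤ (1 + ∑ i, ((p i : ℝ))^2)^2 := by nlinarith
  exact mul_le_mul_of_nonneg_right hsq (sq_nonneg _)

lemma lhs_eq (a : P → ℝ) (ha : ∀ p, 0 ≤ a p) :
    (∑' (p₁ : P) (p₂ : P) (p₃ : P), ENNReal.ofReal
        ((∑ i, ((p₁ i : ℝ)) ^ 2) * (a p₁ * a p₂ * a p₃ * a (-p₁ - p₂ - p₃))))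
    = ∑' p₁ : P, (nu p₁ * al a p₁) * G (al a) (al a) (al a) p₁ := by
  refine tsum_congr fun p₁ => ?_
  rw [G, ENNReal.tsum_prod (f := fun p₂ p₃ => al a p₂ * al a p₃ * al a (-p₁ - p₂ - p₃))]
  rw [← ENNReal.tsum_mul_left]
  refine tsum_congr fun p₂ => ?_
  rw [← ENNReal.tsum_mul_left]
  refine tsum_congr fun p₃ => ?_
  have hn : (0:ℝ) ≤ ∑ i, ((p₁ i : ℝ))^2 := by positivity
  rw [ENNReal.ofReal_mul hn,
    ENNReal.ofReal_mul (mul_nonneg (mul_nonneg (ha p₁) (ha p₂)) (ha p₃)),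
    ENNReal.ofReal_mul (mul_nonneg (ha p₁) (ha p₂)),
    ENNReal.ofReal_mul (ha p₁)]
  unfold nu al
  ring

end QFSE

open scoped ENNReal

/-- The quadruple Fourier-sum estimate (8.37)/(6.49)-(6.50) of
Frank–Hainzl–Seiringer–Solovej: for nonnegative coefficients `a : ℤ³ → [0,∞)` with
`Σ (1+|p|²)² a(p)² < ∞`,
`Σ |p₁|² a(p₁)a(p₂)a(p₃)a(-p₁-p₂-p₃) ≤ C (Σ (1+|p|²)² a(p)²)^{1/2} (Σ (1+|p|²) a(p)²)^{3/2}`. -/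
theorem quadruple_fourier_sum_estimate :
    ∃ C : ℝ, 0 < C ∧
      ∀ a : (Fin 3 → ℤ) → ℝ, (∀ p, 0 ≤ a p) →
      Summable (fun p : Fin 3 → ℤ =>
        (1 + ∑ i, ((p i : ℝ)) ^ 2) ^ 2 * a p ^ 2) →
      (∑' (p₁ : Fin 3 → ℤ) (p₂ : Fin 3 → ℤ) (p₃ : Fin 3 → ℤ),
          ENNReal.ofReal
            ((∑ i, ((p₁ i : ℝ)) ^ 2) * (a p₁ * a p₂ * a p₃ * a (-p₁ - p₂ - p₃))))
        ≤ ENNReal.ofReal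
            (C * Real.sqrt (∑' p : Fin 3 → ℤ, (1 + ∑ i, ((p i : ℝ)) ^ 2) ^ 2 * a p ^ 2) *
              (∑' p : Fin 3 → ℤ, (1 + ∑ i, ((p i : ℝ)) ^ 2) * a p ^ 2) ^ ((3 : ℝ) / 2)) := by
  classical
  set Ctot : ℝ≥0∞ := (2:ℝ≥0∞)^(9:ℝ) * QFSE.Cth^2 with hCtot
  have hCtop : Ctot ≠ ⊤ := by
    refine ENNReal.mul_ne_top ?_ (ENNReal.pow_ne_top QFSE.Cth_ne_top)
    exact ENNReal.rpow_ne_top_of_nonneg (by norm_num) ENNReal.ofNat_ne_top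
  have hC0 : (0:ℝ) ≤ Ctot.toReal + 1 := by
    have := ENNReal.toReal_nonneg (a := Ctot)
    linarith
  refine ⟨Ctot.toReal + 1, by nlinarith [ENNReal.toReal_nonneg (a := Ctot)], fun a ha hsum => ?_⟩
  have hterm2 : ∀ p : QFSE.P, 0 ≤ (1 + ∑ i, ((p i : ℝ))^2)^2 * a p^2 := fun p => by positivity
  have hterm1 : ∀ p : QFSE.P, 0 ≤ (1 + ∑ i, ((p i : ℝ))^2) * a p^2 := fun p => by positivity
  have hsum1 : Summable (fun p : QFSE.P => (1 + ∑ i, ((p i : ℝ))^2) * a p^2) := by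
    refine Summable.of_nonneg_of_le hterm1 (fun p => ?_) hsum
    have hs : (0:ℝ) ≤ ∑ i, ((p i : ℝ))^2 := by positivity
    have h1 : (1 + ∑ i, ((p i : ℝ))^2) ≤ (1 + ∑ i, ((p i : ℝ))^2)^2 := by nlinarith
    exact mul_le_mul_of_nonneg_right h1 (sq_nonneg _)
  set S₂ : ℝ := ∑' p : QFSE.P, (1 + ∑ i, ((p i : ℝ))^2)^2 * a p^2 with hS₂
  set S₁ : ℝ := ∑' p : QFSE.P, (1 + ∑ i, ((p i : ℝ))^2) * a p^2 with hS₁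
  have hS₂0 : (0:ℝ) ≤ S₂ := tsum_nonneg hterm2
  have hS₁0 : (0:ℝ) ≤ S₁ := tsum_nonneg hterm1
  have hM2 : (∑' p : QFSE.P, ENNReal.ofReal ((1 + ∑ i, ((p i : ℝ))^2)^2 * a p^2))
      = ENNReal.ofReal S₂ := (ENNReal.ofReal_tsum_of_nonneg hterm2 hsum).symm
  have hM1 : (∑' p : QFSE.P, ENNReal.ofReal ((1 + ∑ i, ((p i : ℝ))^2) * a p^2))
      = ENNReal.ofReal S₁ := (ENNReal.ofReal_tsum_of_nonneg hterm1 hsum1).symm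
  have hEj : ∑' j : ℕ, QFSE.Ej a j = ENNReal.ofReal S₁ := by
    rw [QFSE.sum_Ej a, hM1]
  rw [QFSE.lhs_eq a ha]
  have step1 : ∑' p₁ : QFSE.P, (QFSE.nu p₁ * QFSE.al a p₁) *
        QFSE.G (QFSE.al a) (QFSE.al a) (QFSE.al a) p₁
      ≤ (ENNReal.ofReal S₂)^((1:ℝ)/2) *
        (∑' p₁ : QFSE.P, (QFSE.G (QFSE.al a) (QFSE.al a) (QFSE.al a) p₁)^2)^((1:ℝ)/2) := by
    refine le_trans (QFSE.enn_cs _ _) (mul_le_mul' (ENNReal.rpow_le_rpow ?_ (by norm_num)) le_rfl)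
    rw [← hM2]
    exact ENNReal.tsum_le_tsum (QFSE.nual_sq_le a ha)
  have step2 : (∑' p₁ : QFSE.P, (QFSE.G (QFSE.al a) (QFSE.al a) (QFSE.al a) p₁)^2)^((1:ℝ)/2)
      ≤ ∑' K : ℕ × ℕ × ℕ, QFSE.l2n (QFSE.TT a K) := by
    refine le_trans (ENNReal.rpow_le_rpow (QFSE.mink a) (by norm_num)) ?_
    rw [QFSE.sq_rpow_half]
  have step3 : ∑' K : ℕ × ℕ × ℕ, QFSE.l2n (QFSE.TT a K)
      ≤ (2:ℝ≥0∞)^(9:ℝ) * ((ENNReal.ofReal S₁)^((1:ℝ)/2) *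
          (QFSE.Cth^2 * ENNReal.ofReal S₁)) := by
    calc ∑' K : ℕ × ℕ × ℕ, QFSE.l2n (QFSE.TT a K)
        ≤ ∑' K : ℕ × ℕ × ℕ, (2:ℝ≥0∞)^(9:ℝ) *
            ((QFSE.kap K.1 K.2.2 * QFSE.kap K.2.1 K.2.2) *
             (QFSE.eps a K.1 * QFSE.eps a K.2.1 * QFSE.eps a K.2.2)) :=
          ENNReal.tsum_le_tsum fun K => le_trans (QFSE.PP a ha K) (le_of_eq (mul_assoc _ _ _))
      _ = (2:ℝ≥0∞)^(9:ℝ) * ∑' K : ℕ × ℕ × ℕ,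
            ((QFSE.kap K.1 K.2.2 * QFSE.kap K.2.1 K.2.2) *
             (QFSE.eps a K.1 * QFSE.eps a K.2.1 * QFSE.eps a K.2.2)) := ENNReal.tsum_mul_left
      _ ≤ (2:ℝ≥0∞)^(9:ℝ) * ((∑' j : ℕ, QFSE.Ej a j)^((1:ℝ)/2) *
            (QFSE.Cth^2 * ∑' j : ℕ, QFSE.Ej a j)) := mul_le_mul' le_rfl (QFSE.schur_sum a)
      _ = _ := by rw [hEj]
  have hrpow : (ENNReal.ofReal S₁)^((1:ℝ)/2) * ENNReal.ofReal S₁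
      = (ENNReal.ofReal S₁)^((3:ℝ)/2) := by
    rw [show (3:ℝ)/2 = 1/2 + 1 by norm_num,
      ENNReal.rpow_add_of_nonneg _ _ (by norm_num) (by norm_num), ENNReal.rpow_one]
  have hconv2 : (ENNReal.ofReal S₂)^((1:ℝ)/2) = ENNReal.ofReal (Real.sqrt S₂) := by
    rw [Real.sqrt_eq_rpow, ENNReal.ofReal_rpow_of_nonneg hS₂0 (by norm_num)]
  have hconv1 : (ENNReal.ofReal S₁)^((3:ℝ)/2) = ENNReal.ofReal (S₁ ^ ((3:ℝ)/2)) := by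
    rw [ENNReal.ofReal_rpow_of_nonneg hS₁0 (by norm_num)]
  have hCle : Ctot ≤ ENNReal.ofReal (Ctot.toReal + 1) := by
    calc Ctot = ENNReal.ofReal Ctot.toReal := (ENNReal.ofReal_toReal hCtop).symm
      _ ≤ ENNReal.ofReal (Ctot.toReal + 1) := ENNReal.ofReal_le_ofReal (by linarith)
  calc ∑' p₁ : QFSE.P, (QFSE.nu p₁ * QFSE.al a p₁) *
        QFSE.G (QFSE.al a) (QFSE.al a) (QFSE.al a) p₁
      ≤ (ENNReal.ofReal S₂)^((1:ℝ)/2) *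
        (∑' p₁ : QFSE.P, (QFSE.G (QFSE.al a) (QFSE.al a) (QFSE.al a) p₁)^2)^((1:ℝ)/2) := step1
    _ ≤ (ENNReal.ofReal S₂)^((1:ℝ)/2) * (∑' K : ℕ × ℕ × ℕ, QFSE.l2n (QFSE.TT a K)) :=
        mul_le_mul' le_rfl step2
    _ ≤ (ENNReal.ofReal S₂)^((1:ℝ)/2) * ((2:ℝ≥0∞)^(9:ℝ) * ((ENNReal.ofReal S₁)^((1:ℝ)/2) *
          (QFSE.Cth^2 * ENNReal.ofReal S₁))) := mul_le_mul' le_rfl step3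
    _ = Ctot * ((ENNReal.ofReal S₂)^((1:ℝ)/2) *
          ((ENNReal.ofReal S₁)^((1:ℝ)/2) * ENNReal.ofReal S₁)) := by
        rw [hCtot]; ring
    _ = Ctot * (ENNReal.ofReal (Real.sqrt S₂) * ENNReal.ofReal (S₁ ^ ((3:ℝ)/2))) := by
        rw [hrpow, hconv2, hconv1]
    _ ≤ ENNReal.ofReal (Ctot.toReal + 1) *
          (ENNReal.ofReal (Real.sqrt S₂) * ENNReal.ofReal (S₁ ^ ((3:ℝ)/2))) :=
        mul_le_mul' hCle le_rfl
    _ = ENNReal.ofReal ((Ctot.toReal + 1) * Real.sqrt S₂ * (S₁ ^ ((3:ℝ)/2))) := by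
        rw [ENNReal.ofReal_mul (by positivity), ENNReal.ofReal_mul hC0]
        ring
end

section
/- Let f(z) = -ln(1 + e^{-z}) and let g₁(z) = (e^{2z} - 2z e^z - 1)/(z²(1+e^z)²). Then for every real a ≠ 0, ∫_{{c₂,c₃,c₄,c₅ ≥ 0, c₂+c₃+c₄+c₅ ≤ 1}} f''''( a·(1 - 2c₄ - 2c₅) ) dc₂ dc₃ dc₄ dc₅ = g₁(a) / (16a). Equivalently, the fifth-order divided difference of f at the nodes (a, a, a, -a, -a) equals g₁(a)/(16a). -/
open MeasureTheory Real

/- ### Explicit derivatives of f(z) = -ln(1+e^{-z}) -/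


noncomputable def F0 (z : ℝ) : ℝ := -Real.log (1 + Real.exp (-z))
noncomputable def F1 (z : ℝ) : ℝ := (1 + Real.exp z)⁻¹
noncomputable def F2 (z : ℝ) : ℝ := -(Real.exp z / (1 + Real.exp z) ^ 2)
noncomputable def F3 (z : ℝ) : ℝ := (Real.exp z ^ 2 - Real.exp z) / (1 + Real.exp z) ^ 3
noncomputable def F4 (z : ℝ) : ℝ :=
  (4 * Real.exp z ^ 2 - Real.exp z ^ 3 - Real.exp z) / (1 + Real.exp z) ^ 4

lemma one_add_exp_pos (z : ℝ) : 0 < 1 + Real.exp z := by positivity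
lemma one_add_exp_ne (z : ℝ) : (1 + Real.exp z) ≠ 0 := (one_add_exp_pos z).ne'

lemma hasDerivAt_F0 (z : ℝ) : HasDerivAt F0 (F1 z) z := by
  have h1 : HasDerivAt (fun z : ℝ => 1 + Real.exp (-z)) (-Real.exp (-z)) z := by
    simpa using (show HasDerivAt (fun z : ℝ => 1 + Real.exp (-z)) _ z from (hasDerivAt_const z (1:ℝ)).add
      (((Real.hasDerivAt_exp (-z)).comp z (hasDerivAt_neg z))))
  have hne : (1 + Real.exp (-z)) ≠ 0 := by positivity
  have h2 := (h1.log hne).neg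
  refine h2.congr_deriv ?_
  have := Real.exp_ne_zero z
  rw [F1, Real.exp_neg]
  field_simp
  ring

lemma hasDerivAt_F1 (z : ℝ) : HasDerivAt F1 (F2 z) z := by
  have h := ((Real.hasDerivAt_exp z).const_add 1).inv (one_add_exp_ne z)
  refine h.congr_deriv ?_
  rw [F2]
  ring

lemma hasDerivAt_F2 (z : ℝ) : HasDerivAt F2 (F3 z) z := by
  have hden : HasDerivAt (fun z : ℝ => (1 + Real.exp z) ^ 2) (2 * (1 + Real.exp z) * Real.exp z) z := by
    simpa [mul_comm] using (show HasDerivAt (fun z : ℝ => (1 + Real.exp z) ^ 2) _ z from ((Real.hasDerivAt_exp z).const_add 1).pow 2)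
  have h := ((Real.hasDerivAt_exp z).div hden (by positivity)).neg
  refine h.congr_deriv ?_
  rw [F3]
  have := one_add_exp_ne z
  field_simp
  ring

lemma hasDerivAt_F3 (z : ℝ) : HasDerivAt F3 (F4 z) z := by
  have hnum : HasDerivAt (fun z : ℝ => Real.exp z ^ 2 - Real.exp z)
      (2 * Real.exp z * Real.exp z - Real.exp z) z := by
    simpa [mul_comm] using (show HasDerivAt (fun z : ℝ => Real.exp z ^ 2 - Real.exp z) _ z from ((Real.hasDerivAt_exp z).pow 2).sub (Real.hasDerivAt_exp z))
  have hden : HasDerivAt (fun z : ℝ => (1 + Real.exp z) ^ 3)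
      (3 * (1 + Real.exp z) ^ 2 * Real.exp z) z := by
    simpa [mul_comm] using (show HasDerivAt (fun z : ℝ => (1 + Real.exp z) ^ 3) _ z from ((Real.hasDerivAt_exp z).const_add 1).pow 3)
  have h := hnum.div hden (by positivity)
  refine h.congr_deriv ?_
  rw [F4]
  have := one_add_exp_ne z
  field_simp
  ring

lemma iteratedDeriv_four : iteratedDeriv 4 F0 = F4 := by
  have e1 : deriv F0 = F1 := funext fun z => (hasDerivAt_F0 z).deriv
  have e2 : deriv F1 = F2 := funext fun z => (hasDerivAt_F1 z).deriv
  have e3 : deriv F2 = F3 := funext fun z => (hasDerivAt_F2 z).deriv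
  have e4 : deriv F3 = F4 := funext fun z => (hasDerivAt_F3 z).deriv
  rw [show (4:ℕ) = 3+1 from rfl, iteratedDeriv_succ, show (3:ℕ) = 2+1 from rfl,
    iteratedDeriv_succ, show (2:ℕ) = 1+1 from rfl, iteratedDeriv_succ, iteratedDeriv_one,
    e1, e2, e3, e4]


lemma continuous_F4 : Continuous F4 := by
  apply Continuous.div (by continuity) (by continuity)
  intro z; positivity

noncomputable def G (a t : ℝ) : ℝ :=
  (t*(1-t)^2/2) * F3 (a*(1-2*t)) / (-2*a)
  - ((1-t)^2/2 - t*(1-t)) * F2 (a*(1-2*t)) / (-2*a)^2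
  + (3*t-2) * F1 (a*(1-2*t)) / (-2*a)^3
  - 3 * F0 (a*(1-2*t)) / (-2*a)^4

lemma hasDerivAt_G (a : ℝ) (ha : a ≠ 0) (t : ℝ) :
    HasDerivAt (G a) (t*(1-t)^2/2 * F4 (a*(1-2*t))) t := by
  have hu : HasDerivAt (fun t : ℝ => a*(1-2*t)) (-2*a) t := by
    have : HasDerivAt (fun t : ℝ => 1 - 2*t) (-2) t := by
      simpa using (show HasDerivAt (fun t : ℝ => 1 - 2*t) _ t from (hasDerivAt_const t (1:ℝ)).sub ((hasDerivAt_id t).const_mul 2))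
    simpa [mul_comm] using this.const_mul a
  have h0 := (hasDerivAt_F0 _).comp t hu
  have h1 := (hasDerivAt_F1 _).comp t hu
  have h2 := (hasDerivAt_F2 _).comp t hu
  have h3 := (hasDerivAt_F3 _).comp t hu
  have hp : HasDerivAt (fun t : ℝ => t*(1-t)^2/2) ((1-t)^2/2 - t*(1-t)) t := by
    have hq : HasDerivAt (fun t : ℝ => (1-t)^2) (2*(1-t)*(-1)) t := by
      simpa using (show HasDerivAt (fun t : ℝ => (1-t)^2) _ t from ((hasDerivAt_const t (1:ℝ)).sub (hasDerivAt_id t)).pow 2)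
    have := ((hasDerivAt_id t).mul hq).div_const 2
    refine this.congr_deriv ?_; simp only [id]; ring
  have hp' : HasDerivAt (fun t : ℝ => (1-t)^2/2 - t*(1-t)) (3*t - 2) t := by
    have hq : HasDerivAt (fun t : ℝ => (1-t)^2) (2*(1-t)*(-1)) t := by
      simpa using (show HasDerivAt (fun t : ℝ => (1-t)^2) _ t from ((hasDerivAt_const t (1:ℝ)).sub (hasDerivAt_id t)).pow 2)
    have hr : HasDerivAt (fun t : ℝ => t*(1-t)) ((1-t) + t*(-1)) t := by
      simpa using (show HasDerivAt (fun t : ℝ => t*(1-t)) _ t from (hasDerivAt_id t).mul ((hasDerivAt_const t (1:ℝ)).sub (hasDerivAt_id t)))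
    refine ((hq.div_const 2).sub hr).congr_deriv ?_; ring
  have hp'' : HasDerivAt (fun t : ℝ => 3*t - 2) (3:ℝ) t := by
    simpa using ((hasDerivAt_id t).const_mul 3).sub_const 2
  have H := ((((hp.mul h3).div_const (-2*a)).sub
      ((hp'.mul h2).div_const ((-2*a)^2))).add
      ((hp''.mul h1).div_const ((-2*a)^3))).sub
      (((hasDerivAt_const t (3:ℝ)).mul h0).div_const ((-2*a)^4))
  refine H.congr_deriv ?_
  simp only [Function.comp_apply]
  field_simp
  ring

lemma log_diff (a : ℝ) : Real.log (1 + Real.exp a) - Real.log (1 + Real.exp (-a)) = a := by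
  have h1 : (1:ℝ) + Real.exp a = Real.exp a * (1 + Real.exp (-a)) := by
    rw [mul_add, mul_one, ← Real.exp_add]; simp [add_comm]
  rw [h1, Real.log_mul (Real.exp_ne_zero a) (by positivity), Real.log_exp]
  ring

lemma step_C (a : ℝ) (ha : a ≠ 0) :
    (∫ t in (0:ℝ)..1, t*(1-t)^2/2 * F4 (a*(1-2*t)))
      = ((Real.exp (2 * a) - 2 * a * Real.exp a - 1) /
          (a ^ 2 * (1 + Real.exp a) ^ 2)) / (16 * a) := by
  have hcont : Continuous fun t : ℝ => t*(1-t)^2/2 * F4 (a*(1-2*t)) := by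
    exact (by continuity : Continuous fun t : ℝ => t*(1-t)^2/2).mul
      (continuous_F4.comp (by continuity))
  rw [intervalIntegral.integral_eq_sub_of_hasDerivAt
    (fun t _ => hasDerivAt_G a ha t) (hcont.intervalIntegrable 0 1)]
  have hea := Real.exp_ne_zero a
  have h1e : (1:ℝ) + Real.exp a ≠ 0 := by positivity
  have h1e' : (1:ℝ) + Real.exp (-a) ≠ 0 := by positivity
  have e0 : F0 (-a) = -a + F0 a := by
    simp only [F0, neg_neg]
    have := log_diff a; linarith
  simp only [G]
  rw [show a * (1 - 2*(1:ℝ)) = -a by ring, show a * (1 - 2*(0:ℝ)) = a by ring, e0]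
  rw [show (1:ℝ)*(1-1)^2/2 = 0 by norm_num, show ((1:ℝ)-1)^2/2 - 1*(1-1) = 0 by norm_num,
    show (0:ℝ)*(1-0)^2/2 = 0 by norm_num, show (3*(1:ℝ)-2) = 1 by norm_num,
    show (3*(0:ℝ)-2) = -2 by norm_num, show ((1:ℝ)-0)^2/2 - 0*(1-0) = 1/2 by norm_num]
  generalize F0 a = L
  have hF1a : F1 (-a) = Real.exp a / (1 + Real.exp a) := by
    simp only [F1]; rw [Real.exp_neg]; rw [Real.exp_neg] at h1e'; field_simp; ring
  rw [hF1a]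
  simp only [F1, F2, zero_mul, zero_div, zero_sub, sub_zero]
  rw [show (2:ℝ)*a = a + a from two_mul a, Real.exp_add]
  rw [show ((-2:ℝ)*a)^2 = 4*a^2 by ring, show ((-2:ℝ)*a)^3 = -(8*a^3) by ring,
    show ((-2:ℝ)*a)^4 = 16*a^4 by ring]
  simp only [div_neg, neg_neg, neg_mul, neg_div]
  field_simp
  ring

/- ### Measure-theoretic reduction -/

-- simplex helper lemmas
lemma simplex_meas {n : ℕ} (B : ℝ) :
    MeasurableSet {y : Fin n → ℝ | (∀ i, 0 ≤ y i) ∧ ∑ i, y i ≤ B} := by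
  have h1 : MeasurableSet {y : Fin n → ℝ | ∀ i, 0 ≤ y i} := by
    rw [Set.setOf_forall]
    exact MeasurableSet.iInter fun i =>
      measurableSet_le measurable_const (measurable_pi_apply i)
  have h2 : MeasurableSet {y : Fin n → ℝ | ∑ i, y i ≤ B} :=
    measurableSet_le (Finset.univ.measurable_sum fun i _ => measurable_pi_apply i)
      measurable_const
  exact h1.inter h2

lemma simplex_compact {n : ℕ} (B : ℝ) :
    IsCompact {y : Fin n → ℝ | (∀ i, 0 ≤ y i) ∧ ∑ i, y i ≤ B} := by
  have hclosed : IsClosed {y : Fin n → ℝ | (∀ i, 0 ≤ y i) ∧ ∑ i, y i ≤ B} := by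
    have h1 : IsClosed {y : Fin n → ℝ | ∀ i, 0 ≤ y i} := by
      rw [Set.setOf_forall]
      exact isClosed_iInter fun i => isClosed_le continuous_const (continuous_apply i)
    have h2 : IsClosed {y : Fin n → ℝ | ∑ i, y i ≤ B} :=
      isClosed_le (continuous_finset_sum _ fun i _ => continuous_apply i) continuous_const
    exact h1.inter h2
  have hsub : {y : Fin n → ℝ | (∀ i, 0 ≤ y i) ∧ ∑ i, y i ≤ B}
      ⊆ Set.Icc (0 : Fin n → ℝ) (fun _ => max B 0) := by
    rintro y ⟨h1, h2⟩
    refine ⟨fun i => h1 i, fun i => ?_⟩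
    have : y i ≤ ∑ j, y j :=
      Finset.single_le_sum (fun j _ => h1 j) (Finset.mem_univ i)
    exact le_trans this (le_trans h2 (le_max_left _ _))
  have hIcc : IsCompact (Set.Icc (0 : Fin n → ℝ) (fun _ => max B 0)) := by
    rw [← Set.pi_univ_Icc]
    exact isCompact_univ_pi fun i => isCompact_Icc
  exact hIcc.of_isClosed_subset hclosed hsub

lemma simplex_integrable {n : ℕ} (B : ℝ) (g : (Fin n → ℝ) → ℝ) (hg : Continuous g) :
    Integrable ({y : Fin n → ℝ | (∀ i, 0 ≤ y i) ∧ ∑ i, y i ≤ B}.indicator g) := by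
  rw [integrable_indicator_iff (simplex_meas B)]
  exact hg.continuousOn.integrableOn_compact (simplex_compact B)

-- triangle integral over ℝ × ℝ
lemma triangle_meas (R : ℝ) :
    MeasurableSet {q : ℝ × ℝ | 0 ≤ q.1 ∧ 0 ≤ q.2 ∧ q.1 + q.2 ≤ R} := by
  refine (measurableSet_le measurable_const measurable_fst).inter
    ((measurableSet_le measurable_const measurable_snd).inter
      (measurableSet_le (measurable_fst.add measurable_snd) measurable_const))

lemma triangle_integral (C R : ℝ) :
    (∫ p : ℝ × ℝ, {q : ℝ × ℝ | 0 ≤ q.1 ∧ 0 ≤ q.2 ∧ q.1 + q.2 ≤ R}.indicator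
        (fun _ => C) p)
      = C * max R 0 ^ 2 / 2 := by
  set T := {q : ℝ × ℝ | 0 ≤ q.1 ∧ 0 ≤ q.2 ∧ q.1 + q.2 ≤ R} with hT
  have hTsub : T ⊆ Set.Icc 0 (max R 0) ×ˢ Set.Icc 0 (max R 0) := by
    rintro ⟨u, v⟩ ⟨h1, h2, h3⟩
    constructor
    · exact ⟨h1, le_max_of_le_left (by linarith)⟩
    · exact ⟨h2, le_max_of_le_left (by linarith)⟩
  have hTfin : volume T < ⊤ := by
    refine lt_of_le_of_lt (measure_mono hTsub) ?_
    rw [Measure.volume_eq_prod, Measure.prod_prod]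
    exact ENNReal.mul_lt_top (by simp [Real.volume_Icc]) (by simp [Real.volume_Icc])
  have hInt : Integrable (T.indicator fun _ => C) := by
    rw [integrable_indicator_iff (triangle_meas R)]
    exact integrableOn_const hTfin.ne
  rw [Measure.volume_eq_prod] at hInt ⊢
  rw [integral_prod _ hInt]
  have hinner : ∀ u : ℝ, (∫ v, T.indicator (fun _ => C) (u, v))
      = (Set.Icc 0 R).indicator (fun u => (R - u) * C) u := by
    intro u
    by_cases hu : 0 ≤ u
    · have : (fun v => T.indicator (fun _ => C) (u, v))
          = (Set.Icc 0 (R - u)).indicator fun _ => C := by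
        funext v
        simp only [Set.indicator_apply, hT, Set.mem_setOf_eq, Set.mem_Icc]
        by_cases hv : 0 ≤ v ∧ v ≤ R - u
        · rw [if_pos ⟨hu, hv.1, by linarith [hv.2]⟩, if_pos hv]
        · rw [if_neg, if_neg hv]
          rintro ⟨_, h2, h3⟩; exact hv ⟨h2, by linarith⟩
      rw [this, integral_indicator_const _ measurableSet_Icc]
      rw [measureReal_def, Real.volume_Icc]
      simp only [smul_eq_mul, Set.indicator_apply, Set.mem_Icc]
      by_cases hR : u ≤ R
      · rw [ENNReal.toReal_ofReal (by linarith), if_pos ⟨hu, hR⟩]; ring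
      · rw [if_neg (fun h => hR h.2), ENNReal.ofReal_eq_zero.2 (by linarith)]
        simp
    · have : (fun v => T.indicator (fun _ => C) (u, v)) = fun _ => 0 := by
        funext v
        simp only [Set.indicator_apply, hT, Set.mem_setOf_eq]
        rw [if_neg (fun h => hu h.1)]
      rw [this, integral_zero]
      rw [Set.indicator_apply, if_neg (fun h => hu h.1)]
  rw [integral_congr_ae (Filter.Eventually.of_forall hinner)]
  rw [integral_indicator measurableSet_Icc]
  by_cases hR : 0 ≤ R
  · rw [MeasureTheory.integral_Icc_eq_integral_Ioc,
      ← intervalIntegral.integral_of_le hR, max_eq_left hR]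
    have h1 : IntervalIntegrable (fun _ : ℝ => R * C) volume 0 R := intervalIntegrable_const
    have h2 : IntervalIntegrable (fun x : ℝ => x * C) volume 0 R :=
      (continuous_id.mul continuous_const).intervalIntegrable 0 R
    have : (fun x : ℝ => (R - x) * C) = fun x : ℝ => R * C - x * C := by
      funext x; ring
    have hid : (∫ x : ℝ in (0:ℝ)..R, x) = (R^2 - 0^2)/2 := by
      open intervalIntegral in exact integral_id
    rw [this, intervalIntegral.integral_sub h1 h2,
      intervalIntegral.integral_const, intervalIntegral.integral_mul_const, hid]
    simp only [smul_eq_mul, sub_zero]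
    ring
  · rw [Set.Icc_eq_empty hR, max_eq_right (le_of_not_ge hR)]
    simp

lemma indicator_snoc {n : ℕ} (B : ℝ) (g : (Fin (n+1) → ℝ) → ℝ) (t : ℝ) (y : Fin n → ℝ) :
    {c : Fin (n+1) → ℝ | (∀ i, 0 ≤ c i) ∧ ∑ i, c i ≤ B}.indicator g (Fin.snoc y t)
      = if 0 ≤ t then {y : Fin n → ℝ | (∀ i, 0 ≤ y i) ∧ ∑ i, y i ≤ B - t}.indicator
          (fun y => g (Fin.snoc y t)) y else 0 := by
  have hsum : ∑ i, (Fin.snoc y t : Fin (n+1) → ℝ) i = (∑ i, y i) + t := by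
    rw [Fin.sum_univ_castSucc]
    simp [Fin.snoc_castSucc, Fin.snoc_last]
  have hall : (∀ i, 0 ≤ (Fin.snoc y t : Fin (n+1) → ℝ) i)
      ↔ ((∀ i, 0 ≤ y i) ∧ 0 ≤ t) := by
    constructor
    · intro h
      exact ⟨fun i => by simpa [Fin.snoc_castSucc] using h i.castSucc,
        by simpa [Fin.snoc_last] using h (Fin.last n)⟩
    · rintro ⟨h1, h2⟩ i
      refine Fin.lastCases ?_ ?_ i
      · simpa [Fin.snoc_last] using h2
      · intro j; simpa [Fin.snoc_castSucc] using h1 j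
  by_cases ht : 0 ≤ t
  · rw [if_pos ht, Set.indicator_apply, Set.indicator_apply]
    have hiff : (Fin.snoc y t ∈ {c : Fin (n+1) → ℝ | (∀ i, 0 ≤ c i) ∧ ∑ i, c i ≤ B})
        ↔ (y ∈ {y : Fin n → ℝ | (∀ i, 0 ≤ y i) ∧ ∑ i, y i ≤ B - t}) := by
      simp only [Set.mem_setOf_eq, hall, hsum]
      constructor
      · rintro ⟨⟨h1, _⟩, h2⟩; exact ⟨h1, by linarith⟩
      · rintro ⟨h1, h2⟩; exact ⟨⟨h1, ht⟩, by linarith⟩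
    rw [if_congr hiff rfl rfl]
  · rw [if_neg ht, Set.indicator_apply, if_neg]
    simp only [Set.mem_setOf_eq, hall]
    rintro ⟨⟨_, h2⟩, _⟩
    exact ht h2

lemma dim2_integral (C R : ℝ) :
    (∫ z : Fin 2 → ℝ, {z : Fin 2 → ℝ | (∀ i, 0 ≤ z i) ∧ ∑ i, z i ≤ R}.indicator
        (fun _ => C) z)
      = C * max R 0 ^ 2 / 2 := by
  rw [← ((volume_preserving_finTwoArrow ℝ).symm).integral_comp
    (MeasurableEquiv.measurableEmbedding _)]
  rw [← triangle_integral C R]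
  congr 1
  funext p
  obtain ⟨u, v⟩ := p
  have h1 : (MeasurableEquiv.finTwoArrow (α := ℝ)).symm (u, v) = ![u, v] := rfl
  rw [h1]
  simp only [Set.indicator_apply, Set.mem_setOf_eq, Fin.forall_fin_two,
    Fin.sum_univ_two, Matrix.cons_val_zero, Matrix.cons_val_one, Matrix.head_cons]
  simp only [and_assoc]

lemma dim3_integral (φ : ℝ → ℝ) (hφ : Continuous φ) (t : ℝ) :
    (∫ y : Fin 3 → ℝ, {y : Fin 3 → ℝ | (∀ i, 0 ≤ y i) ∧ ∑ i, y i ≤ 1 - t}.indicator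
        (fun y => φ (y 2 + t)) y)
      = if t ≤ 1 then ∫ u in t..(1:ℝ), (1 - u)^2/2 * φ u else 0 := by
  have hg : Continuous fun y : Fin 3 → ℝ => φ (y 2 + t) :=
    hφ.comp ((continuous_apply 2).add continuous_const)
  have hInt : Integrable ({y : Fin 3 → ℝ | (∀ i, 0 ≤ y i) ∧ ∑ i, y i ≤ 1 - t}.indicator
      fun y => φ (y 2 + t)) := simplex_integrable _ _ hg
  -- peel coordinate 2 (the last one)
  rw [← ((volume_preserving_piFinSuccAbove (fun _ : Fin 3 => ℝ) 2).symm).integral_comp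
    (MeasurableEquiv.measurableEmbedding _)]
  have hInt2 : Integrable (fun p : ℝ × (Fin 2 → ℝ) =>
      ({y : Fin 3 → ℝ | (∀ i, 0 ≤ y i) ∧ ∑ i, y i ≤ 1 - t}.indicator
        fun y => φ (y 2 + t)) ((MeasurableEquiv.piFinSuccAbove (fun _ : Fin 3 => ℝ) 2).symm p)) :=
    (((volume_preserving_piFinSuccAbove (fun _ : Fin 3 => ℝ) 2).symm).integrable_comp_emb
      (MeasurableEquiv.measurableEmbedding _)).2 hInt
  rw [Measure.volume_eq_prod] at hInt2
  rw [show (volume : Measure (ℝ × (Fin 2 → ℝ))) = (volume : Measure ℝ).prod volume from rfl]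
  rw [integral_prod _ hInt2]
  have hsymm : ∀ (s : ℝ) (z : Fin 2 → ℝ),
      (MeasurableEquiv.piFinSuccAbove (fun _ : Fin 3 => ℝ) 2).symm (s, z) = Fin.snoc z s := by
    intro s z
    simp [MeasurableEquiv.piFinSuccAbove_symm_apply, Fin.insertNthEquiv,
      show (2 : Fin 3) = Fin.last 2 from rfl, Fin.insertNth_last', Fin.snocEquiv]
    exact Fin.insertNth_last' s z
  -- inner integral over z for fixed s
  have hinner : ∀ s : ℝ,
      (∫ z : Fin 2 → ℝ, ({y : Fin 3 → ℝ | (∀ i, 0 ≤ y i) ∧ ∑ i, y i ≤ 1 - t}.indicator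
        (fun y => φ (y 2 + t)) ((MeasurableEquiv.piFinSuccAbove (fun _ : Fin 3 => ℝ) 2).symm (s, z))))
      = (Set.Icc 0 (1 - t)).indicator (fun s => φ (s + t) * (1 - t - s)^2/2) s := by
    intro s
    have heval : ∀ z : Fin 2 → ℝ,
        ({y : Fin 3 → ℝ | (∀ i, 0 ≤ y i) ∧ ∑ i, y i ≤ 1 - t}.indicator
          (fun y => φ (y 2 + t)) ((MeasurableEquiv.piFinSuccAbove (fun _ : Fin 3 => ℝ) 2).symm (s, z)))
        = if 0 ≤ s then ({z : Fin 2 → ℝ | (∀ i, 0 ≤ z i) ∧ ∑ i, z i ≤ 1 - t - s}.indicator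
            (fun _ => φ (s + t)) z) else 0 := by
      intro z
      rw [hsymm s z, indicator_snoc]
      rfl
    rw [integral_congr_ae (Filter.Eventually.of_forall (fun z => heval z))]
    by_cases hs : 0 ≤ s
    · simp only [if_pos hs]
      rw [dim2_integral]
      rw [Set.indicator_apply]
      simp only [Set.mem_Icc]
      by_cases hle : s ≤ 1 - t
      · rw [if_pos ⟨hs, hle⟩, max_eq_left (by linarith)]
      · rw [if_neg (fun h => hle h.2), max_eq_right (by linarith [not_le.1 hle])]
        simp
    · simp only [if_neg hs, integral_zero]
      rw [Set.indicator_apply, if_neg (fun h => hs h.1)]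
  rw [integral_congr_ae (Filter.Eventually.of_forall hinner)]
  rw [integral_indicator measurableSet_Icc]
  by_cases ht : t ≤ 1
  · rw [if_pos ht, MeasureTheory.integral_Icc_eq_integral_Ioc,
      ← intervalIntegral.integral_of_le (by linarith : (0:ℝ) ≤ 1 - t)]
    have : (fun s => φ (s + t) * (1 - t - s)^2/2)
        = fun s => (fun u => (1 - u)^2/2 * φ u) (s + t) := by
      funext s; simp only; ring_nf
    rw [this, intervalIntegral.integral_comp_add_right (fun u => (1 - u)^2/2 * φ u) t]
    norm_num
  · rw [if_neg ht, Set.Icc_eq_empty (by intro h; exact ht (by linarith))]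
    simp

lemma swap_lemma (g : ℝ → ℝ) (hg : Continuous g) :
    (∫ t in (0:ℝ)..1, (∫ u in t..(1:ℝ), g u)) = ∫ u in (0:ℝ)..1, u * g u := by
  set K : ℝ → ℝ := fun t => ∫ u in t..(1:ℝ), g u with hK
  have hKder : ∀ t : ℝ, HasDerivAt K (-g t) t := by
    intro t
    have h1 : HasDerivAt (fun t : ℝ => ∫ u in (1:ℝ)..t, g u) (g t) t :=
      (hg.integral_hasStrictDerivAt 1 t).hasDerivAt
    have h2 : K = fun t : ℝ => -(∫ u in (1:ℝ)..t, g u) := by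
      funext s
      exact intervalIntegral.integral_symm 1 s
    rw [h2]
    exact h1.neg
  have hKcont : Continuous K :=
    continuous_iff_continuousAt.2 fun t => (hKder t).differentiableAt.continuousAt
  set M : ℝ → ℝ := fun t => t * K t + ∫ u in (0:ℝ)..t, u * g u with hM
  have hMder : ∀ t : ℝ, HasDerivAt M (K t) t := by
    intro t
    have h1 : HasDerivAt (fun t : ℝ => t * K t) (1 * K t + t * (-g t)) t :=
      (hasDerivAt_id t).mul (hKder t)
    have h2 : HasDerivAt (fun t : ℝ => ∫ u in (0:ℝ)..t, u * g u) (t * g t) t :=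
      (((continuous_id.mul hg)).integral_hasStrictDerivAt 0 t).hasDerivAt
    have := h1.add h2
    refine this.congr_deriv ?_
    ring
  rw [intervalIntegral.integral_eq_sub_of_hasDerivAt (fun t _ => hMder t)
    (hKcont.intervalIntegrable 0 1)]
  have hK1 : K 1 = 0 := intervalIntegral.integral_same
  simp only [hM, hK1, mul_zero, zero_add, zero_mul, intervalIntegral.integral_same, add_zero, sub_zero]

lemma step_B (φ : ℝ → ℝ) (hφ : Continuous φ) :
    (∫ c in {c : Fin 4 → ℝ | (∀ i, 0 ≤ c i) ∧ ∑ i, c i ≤ 1}, φ (c 2 + c 3))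
      = ∫ t in (0:ℝ)..1, t * ((1 - t)^2/2 * φ t) := by
  have hg : Continuous fun c : Fin 4 → ℝ => φ (c 2 + c 3) :=
    hφ.comp ((continuous_apply 2).add (continuous_apply 3))
  rw [← integral_indicator (simplex_meas 1)]
  have hInt : Integrable ({c : Fin 4 → ℝ | (∀ i, 0 ≤ c i) ∧ ∑ i, c i ≤ 1}.indicator
      fun c => φ (c 2 + c 3)) := simplex_integrable 1 _ hg
  rw [← ((volume_preserving_piFinSuccAbove (fun _ : Fin 4 => ℝ) 3).symm).integral_comp
    (MeasurableEquiv.measurableEmbedding _)]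
  have hInt2 : Integrable (fun p : ℝ × (Fin 3 → ℝ) =>
      ({c : Fin 4 → ℝ | (∀ i, 0 ≤ c i) ∧ ∑ i, c i ≤ 1}.indicator
        (fun c => φ (c 2 + c 3))) ((MeasurableEquiv.piFinSuccAbove (fun _ : Fin 4 => ℝ) 3).symm p)) :=
    (((volume_preserving_piFinSuccAbove (fun _ : Fin 4 => ℝ) 3).symm).integrable_comp_emb
      (MeasurableEquiv.measurableEmbedding _)).2 hInt
  rw [Measure.volume_eq_prod] at hInt2
  rw [show (volume : Measure (ℝ × (Fin 3 → ℝ))) = (volume : Measure ℝ).prod volume from rfl]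
  rw [integral_prod _ hInt2]
  have hsymm : ∀ (t : ℝ) (y : Fin 3 → ℝ),
      (MeasurableEquiv.piFinSuccAbove (fun _ : Fin 4 => ℝ) 3).symm (t, y) = Fin.snoc y t := by
    intro t y
    simp [MeasurableEquiv.piFinSuccAbove_symm_apply, Fin.insertNthEquiv,
      show (3 : Fin 4) = Fin.last 3 from rfl, Fin.insertNth_last', Fin.snocEquiv]
    exact Fin.insertNth_last' t y
  have houter : ∀ t : ℝ,
      (∫ y : Fin 3 → ℝ, ({c : Fin 4 → ℝ | (∀ i, 0 ≤ c i) ∧ ∑ i, c i ≤ 1}.indicator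
        (fun c => φ (c 2 + c 3)) ((MeasurableEquiv.piFinSuccAbove (fun _ : Fin 4 => ℝ) 3).symm (t, y))))
      = (Set.Icc (0:ℝ) 1).indicator (fun t => ∫ u in t..(1:ℝ), (1 - u)^2/2 * φ u) t := by
    intro t
    have heval : ∀ y : Fin 3 → ℝ,
        ({c : Fin 4 → ℝ | (∀ i, 0 ≤ c i) ∧ ∑ i, c i ≤ 1}.indicator
          (fun c => φ (c 2 + c 3)) ((MeasurableEquiv.piFinSuccAbove (fun _ : Fin 4 => ℝ) 3).symm (t, y)))
        = if 0 ≤ t then ({y : Fin 3 → ℝ | (∀ i, 0 ≤ y i) ∧ ∑ i, y i ≤ 1 - t}.indicator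
            (fun y => φ (y 2 + t)) y) else 0 := by
      intro y
      rw [hsymm t y, indicator_snoc]
      rfl
    rw [integral_congr_ae (Filter.Eventually.of_forall heval)]
    by_cases ht0 : 0 ≤ t
    · simp only [if_pos ht0]
      rw [dim3_integral φ hφ t]
      rw [Set.indicator_apply]
      simp only [Set.mem_Icc]
      by_cases ht1 : t ≤ 1
      · rw [if_pos ht1, if_pos ⟨ht0, ht1⟩]
      · rw [if_neg ht1, if_neg (fun h => ht1 h.2)]
    · simp only [if_neg ht0, integral_zero]
      rw [Set.indicator_apply, if_neg (fun h => ht0 h.1)]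
  rw [integral_congr_ae (Filter.Eventually.of_forall houter)]
  rw [integral_indicator measurableSet_Icc,
    MeasureTheory.integral_Icc_eq_integral_Ioc,
    ← intervalIntegral.integral_of_le (by norm_num : (0:ℝ) ≤ 1)]
  exact swap_lemma (fun u => (1 - u)^2/2 * φ u)
    ((by continuity : Continuous fun u : ℝ => (1 - u)^2/2).mul hφ)


/-- The fifth-order divided difference of `f(z) = -ln(1+e^{-z})` at the nodes
`(a, a, a, -a, -a)`, written via the Hermite–Genocchi simplex formula, equals
`g₁(a)/(16a)` where `g₁(z) = (e^{2z} - 2z e^z - 1)/(z²(1+e^z)²)`. -/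
theorem divided_difference_aaa_mm (a : ℝ) (ha : a ≠ 0) :
    (∫ c in {c : Fin 4 → ℝ | (∀ i, 0 ≤ c i) ∧ ∑ i, c i ≤ 1},
        iteratedDeriv 4 (fun z => -Real.log (1 + Real.exp (-z)))
          (a * (1 - 2 * c 2 - 2 * c 3)))
      = ((Real.exp (2 * a) - 2 * a * Real.exp a - 1) /
          (a ^ 2 * (1 + Real.exp a) ^ 2)) / (16 * a) := by
  rw [show (fun z => -Real.log (1 + Real.exp (-z))) = F0 from rfl, iteratedDeriv_four]
  set φ : ℝ → ℝ := fun t => F4 (a * (1 - 2 * t)) with hφdef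
  have hφ : Continuous φ := continuous_F4.comp (by continuity)
  have h1 : (∫ c in {c : Fin 4 → ℝ | (∀ i, 0 ≤ c i) ∧ ∑ i, c i ≤ 1},
      F4 (a * (1 - 2 * c 2 - 2 * c 3)))
      = ∫ c in {c : Fin 4 → ℝ | (∀ i, 0 ≤ c i) ∧ ∑ i, c i ≤ 1}, φ (c 2 + c 3) := by
    refine integral_congr_ae (Filter.Eventually.of_forall fun c => ?_)
    show F4 (a * (1 - 2 * c 2 - 2 * c 3)) = F4 (a * (1 - 2 * (c 2 + c 3)))
    rw [show a * (1 - 2 * c 2 - 2 * c 3) = a * (1 - 2 * (c 2 + c 3)) by ring]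
  rw [h1, step_B φ hφ, ← step_C a ha]
  refine intervalIntegral.integral_congr fun t _ => ?_
  show t * ((1 - t) ^ 2 / 2 * F4 (a * (1 - 2 * t))) = t * (1 - t) ^ 2 / 2 * F4 (a * (1 - 2 * t))
  ring
end
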